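/- arXiv:1211.1666 — 8 statements merged into one kernel-verified Lean document; each statement's English description precedes it below -/
import Mathlib

section
/- Let F be a field of characteristic not 2 and let a, b ∈ F with ab(a−b) ≠ 0. Then the projective cubic curve H: X(aY² − Z²) = Y(bX² − Z²) is smooth (nonsingular). -/
/-- The projective generalized Huff curve `X(aY² − Z²) = Y(bX² − Z²)` over a field of
characteristic ≠ 2 with `ab(a−b) ≠ 0` is smooth: at no projective point of the curve do all
three partial derivatives of `F(X,Y,Z) = X(aY² − Z²) − Y(bX² − Z²)` vanish. -/
theorem generalizedHuff_smooth {F : Type*} [Field F] (a b : F)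
    (h2 : (2 : F) ≠ 0) (ha : a ≠ 0) (hb : b ≠ 0) (hab : a ≠ b) :
    ∀ X Y Z : F, ¬(X = 0 ∧ Y = 0 ∧ Z = 0) →
      X * (a * Y ^ 2 - Z ^ 2) = Y * (b * X ^ 2 - Z ^ 2) →
      ¬((a * Y ^ 2 - Z ^ 2 - 2 * b * X * Y = 0) ∧
        (2 * a * X * Y - b * X ^ 2 + Z ^ 2 = 0) ∧
        (-(2 * X * Z) + 2 * Y * Z = 0)) := by
  intro X Y Z hne hcurve h
  obtain ⟨h1, h2', h3⟩ := h
  by_cases hZ : Z = 0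
  · subst hZ
    have ec : b * (X ^ 2 * Y) = 0 := by linear_combination hcurve - X * h1
    have hXY : X ^ 2 * Y = 0 := by
      rcases mul_eq_zero.mp ec with h | h
      · exact absurd h hb
      · exact h
    rcases mul_eq_zero.mp hXY with h | hY
    · have hX : X = 0 := pow_eq_zero_iff (n := 2) (by norm_num) |>.mp h
      subst hX
      have hY2 : a * Y ^ 2 = 0 := by linear_combination h1
      have hY : Y = 0 := by
        rcases mul_eq_zero.mp hY2 with h | h
        · exact absurd h ha
        · exact pow_eq_zero_iff (n := 2) (by norm_num) |>.mp h
      exact hne ⟨rfl, hY, rfl⟩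
    · subst hY
      have hX2 : b * X ^ 2 = 0 := by linear_combination -h2'
      have hX : X = 0 := by
        rcases mul_eq_zero.mp hX2 with h | h
        · exact absurd h hb
        · exact pow_eq_zero_iff (n := 2) (by norm_num) |>.mp h
      exact hne ⟨hX, rfl, rfl⟩
  · have hYX : Y = X := by
      have : 2 * Z * (Y - X) = 0 := by linear_combination h3
      rcases mul_eq_zero.mp this with h | h
      · rcases mul_eq_zero.mp h with h | h
        · exact absurd h h2
        · exact absurd h hZ
      · exact sub_eq_zero.mp h
    subst hYX
    have hX3 : (a - b) * Y ^ 3 = 0 := by linear_combination hcurve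
    have hX : Y = 0 := by
      rcases mul_eq_zero.mp hX3 with h | h
      · exact absurd (sub_eq_zero.mp h) hab
      · exact pow_eq_zero_iff (n := 3) (by norm_num) |>.mp h
    subst hX
    have : Z ^ 2 = 0 := by linear_combination -h1
    exact hZ (pow_eq_zero_iff (n := 2) (by norm_num) |>.mp this)
end

section
/- Let F be a field of characteristic not 2, a, b ∈ F with a ≠ b. The maps φ(X,Y,Z) = (bX − aY, (b − a)Z, Y − X) and ψ(U,V,W) = (U + aW, U + bW, V) are mutually inverse as maps of projective points between the curves X(aY² − Z²) = Y(bX² − Z²) and V²W = U(U + aW)(U + bW): for any projective point (X:Y:Z) on the first curve, ψ(φ(X,Y,Z)) is projectively equal to (X:Y:Z), and for any (U:V:W) on the second, φ(ψ(U,V,W)) is projectively equal to (U:V:W). -/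
theorem huff_weierstrass_comp_eq_mul {F : Type*} [CommRing F] (a b X Y Z : F) :
    ((b * X - a * Y) + a * (Y - X), (b * X - a * Y) + b * (Y - X), (b - a) * Z)
      = ((b - a) * X, (b - a) * Y, (b - a) * Z) := by
  simp only [Prod.mk.injEq]
  exact ⟨by ring, by ring, trivial⟩

theorem weierstrass_huff_comp_eq_mul {F : Type*} [CommRing F] (a b U V W : F) :
    (b * (U + a * W) - a * (U + b * W), (b - a) * V, (U + b * W) - (U + a * W))
      = ((b - a) * U, (b - a) * V, (b - a) * W) := by
  simp only [Prod.mk.injEq]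
  exact ⟨by ring, trivial, by ring⟩

theorem huff_weierstrass_inverse_general {F : Type*} [Field F] (a b : F)
    (hab : a ≠ b) :
    (∀ X Y Z : F, ¬(X = 0 ∧ Y = 0 ∧ Z = 0) →
      X * (a * Y ^ 2 - Z ^ 2) = Y * (b * X ^ 2 - Z ^ 2) →
      ∃ c : F, c ≠ 0 ∧
        ((b * X - a * Y) + a * (Y - X), (b * X - a * Y) + b * (Y - X), (b - a) * Z)
          = (c * X, c * Y, c * Z)) ∧
    (∀ U V W : F, ¬(U = 0 ∧ V = 0 ∧ W = 0) →
      V ^ 2 * W = U * (U + a * W) * (U + b * W) →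
      ∃ c : F, c ≠ 0 ∧
        (b * (U + a * W) - a * (U + b * W), (b - a) * V, (U + b * W) - (U + a * W))
          = (c * U, c * V, c * W)) :=
  have hba : b - a ≠ 0 := sub_ne_zero.mpr hab.symm
  ⟨fun X Y Z _ _ => ⟨b - a, hba, huff_weierstrass_comp_eq_mul a b X Y Z⟩,
    fun U V W _ _ => ⟨b - a, hba, weierstrass_huff_comp_eq_mul a b U V W⟩⟩

/-- The maps `φ(X,Y,Z) = (bX − aY, (b−a)Z, Y − X)` and `ψ(U,V,W) = (U + aW, U + bW, V)` are
mutually inverse as maps of projective points between the generalized Huff curve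
`X(aY² − Z²) = Y(bX² − Z²)` and the Weierstrass curve `V²W = U(U + aW)(U + bW)`. -/
theorem huff_weierstrass_inverse {F : Type*} [Field F] (a b : F)
    (h2 : (2 : F) ≠ 0) (hab : a ≠ b) :
    (∀ X Y Z : F, ¬(X = 0 ∧ Y = 0 ∧ Z = 0) →
      X * (a * Y ^ 2 - Z ^ 2) = Y * (b * X ^ 2 - Z ^ 2) →
      ∃ c : F, c ≠ 0 ∧
        ((b * X - a * Y) + a * (Y - X), (b * X - a * Y) + b * (Y - X), (b - a) * Z)
          = (c * X, c * Y, c * Z)) ∧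
    (∀ U V W : F, ¬(U = 0 ∧ V = 0 ∧ W = 0) →
      V ^ 2 * W = U * (U + a * W) * (U + b * W) →
      ∃ c : F, c ≠ 0 ∧
        (b * (U + a * W) - a * (U + b * W), (b - a) * V, (U + b * W) - (U + a * W))
          = (c * U, c * V, c * W)) :=
  huff_weierstrass_inverse_general a b hab
end

section
/- Let F be a field of characteristic not 2, a, b ∈ F with a ≠ b. If (X:Y:Z) is a projective point satisfying X(aY² − Z²) = Y(bX² − Z²), then the point (U,V,W) = (bX − aY, (b−a)Z, Y − X) satisfies V²W = U(U + aW)(U + bW). -/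
/-- The map `φ(X,Y,Z) = (bX − aY, (b−a)Z, Y − X)` sends points of the generalized Huff
curve `X(aY² − Z²) = Y(bX² − Z²)` to points of the Weierstrass curve
`V²W = U(U + aW)(U + bW)`. -/
theorem huff_to_weierstrass {F : Type*} [Field F] (a b : F)
    (h2 : (2 : F) ≠ 0) (hab : a ≠ b) (X Y Z : F)
    (h : X * (a * Y ^ 2 - Z ^ 2) = Y * (b * X ^ 2 - Z ^ 2)) :
    ((b - a) * Z) ^ 2 * (Y - X) =
      (b * X - a * Y) * ((b * X - a * Y) + a * (Y - X)) * ((b * X - a * Y) + b * (Y - X)) := by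
  linear_combination (b - a) ^ 2 * h
end

section
/- Let F be a field of characteristic not 2, a, b ∈ F with a ≠ b. If (U:V:W) satisfies V²W = U(U + aW)(U + bW), then (X,Y,Z) = (U + aW, U + bW, V) satisfies X(aY² − Z²) = Y(bX² − Z²). -/
/-- The map `ψ(U,V,W) = (U + aW, U + bW, V)` sends points of the Weierstrass curve
`V²W = U(U + aW)(U + bW)` to points of the generalized Huff curve
`X(aY² − Z²) = Y(bX² − Z²)`. -/
theorem weierstrass_to_huff {F : Type*} [Field F] (a b : F)
    (h2 : (2 : F) ≠ 0) (hab : a ≠ b) (U V W : F)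
    (h : V ^ 2 * W = U * (U + a * W) * (U + b * W)) :
    (U + a * W) * (a * (U + b * W) ^ 2 - V ^ 2) =
      (U + b * W) * (b * (U + a * W) ^ 2 - V ^ 2) := by
  linear_combination (b - a) * h
end

section
/- Let F be a field of characteristic not 2 and a, b ∈ F with ab(a−b) ≠ 0. Let (x₁, y₁) and (x₂, y₂) be affine points on the curve x(ay² − 1) = y(bx² − 1), and suppose (bx₁x₂ + 1)(ay₁y₂ − 1)(bx₁x₂ − 1)(ay₁y₂ + 1) ≠ 0. Then the point (x₃, y₃) with x₃ = (x₁ + x₂)(ay₁y₂ + 1)/((bx₁x₂ + 1)(ay₁y₂ − 1)) and y₃ = (y₁ + y₂)(bx₁x₂ + 1)/((bx₁x₂ − 1)(ay₁y₂ + 1)) also lies on the curve x(ay² − 1) = y(bx² − 1). -/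
/-! After clearing denominators, both sides of the curve equation at `(x₃, y₃)` share the factor
`(a y₁ y₂ + 1)(b x₁ x₂ + 1)`. What remains is a polynomial identity in `a, b, x₁, y₁, x₂, y₂` that
lies in the ideal generated by the curve equations of the two summands. -/

theorem huff_div_div_iff {F : Type*} [Field F] {a b N D M E : F} (hD : D ≠ 0) (hE : E ≠ 0) :
    N / D * (a * (M / E) ^ 2 - 1) = M / E * (b * (N / D) ^ 2 - 1) ↔
      N * D * (a * M ^ 2 - E ^ 2) = M * E * (b * N ^ 2 - D ^ 2) := by
  field_simp

-- The cofactors are the quotients of the division by the two curve equations, which form a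
-- Gröbner basis for the lexicographic order `y₁ > x₂ > a > b > x₁ > y₂`.
theorem huff_add_polynomial_identity {R : Type*} [CommRing R] {a b x₁ y₁ x₂ y₂ : R}
    (h₁ : x₁ * (a * y₁ ^ 2 - 1) = y₁ * (b * x₁ ^ 2 - 1))
    (h₂ : x₂ * (a * y₂ ^ 2 - 1) = y₂ * (b * x₂ ^ 2 - 1)) :
    (x₁ + x₂) * (a * y₁ * y₂ - 1) *
        (a * (y₁ + y₂) ^ 2 * (b * x₁ * x₂ + 1) ^ 2
          - (b * x₁ * x₂ - 1) ^ 2 * (a * y₁ * y₂ + 1) ^ 2) =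
      (y₁ + y₂) * (b * x₁ * x₂ - 1) *
        (b * (x₁ + x₂) ^ 2 * (a * y₁ * y₂ + 1) ^ 2
          - (b * x₁ * x₂ + 1) ^ 2 * (a * y₁ * y₂ - 1) ^ 2) := by
  linear_combination
    (-a ^ 2 * b ^ 2 * x₁ ^ 2 * y₁ * x₂ ^ 2 * y₂ ^ 3 - a ^ 2 * b ^ 2 * x₁ * y₁ * x₂ ^ 3 * y₂ ^ 3
      - a * b ^ 3 * x₁ ^ 3 * x₂ ^ 2 * y₂ ^ 3 + a * b ^ 3 * x₁ ^ 2 * y₁ * x₂ ^ 3 * y₂ ^ 2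
      + b ^ 4 * x₁ ^ 3 * x₂ ^ 3 * y₂ ^ 2 + 2 * a ^ 2 * b * x₁ * y₁ * x₂ * y₂ ^ 3
      + 2 * a ^ 2 * b * y₁ * x₂ ^ 2 * y₂ ^ 3 + a * b ^ 2 * x₁ ^ 2 * y₁ * x₂ ^ 2 * y₂
      - a * b ^ 2 * x₁ ^ 2 * y₁ * x₂ * y₂ ^ 2 + a * b ^ 2 * x₁ ^ 2 * x₂ ^ 2 * y₂ ^ 2
      + a * b ^ 2 * x₁ ^ 2 * x₂ * y₂ ^ 3 + a * b ^ 2 * x₁ * y₁ * x₂ ^ 3 * y₂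
      - a * b ^ 2 * x₁ * y₁ * x₂ ^ 2 * y₂ ^ 2 + a * b ^ 2 * x₁ * x₂ ^ 3 * y₂ ^ 2
      + 2 * a * b ^ 2 * x₁ * x₂ ^ 2 * y₂ ^ 3 - a * b ^ 2 * y₁ * x₂ ^ 3 * y₂ ^ 2
      + b ^ 3 * x₁ ^ 3 * x₂ ^ 2 * y₂ - b ^ 3 * x₁ ^ 3 * x₂ * y₂ ^ 2
      - b ^ 3 * x₁ ^ 2 * x₂ ^ 3 * y₂ - b ^ 3 * x₁ ^ 2 * x₂ ^ 2 * y₂ ^ 2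
      - 2 * b ^ 3 * x₁ * x₂ ^ 3 * y₂ ^ 2 - a ^ 2 * y₁ * y₂ ^ 3 + 2 * a * b * x₁ * y₁ * x₂ * y₂
      + a * b * x₁ * y₁ * y₂ ^ 2 + 6 * a * b * x₁ * x₂ * y₂ ^ 2 + 2 * a * b * y₁ * x₂ ^ 2 * y₂
      + a * b * y₁ * x₂ * y₂ ^ 2 + 6 * a * b * x₂ ^ 2 * y₂ ^ 2 - a * b * x₂ * y₂ ^ 3
      - b ^ 2 * x₁ ^ 2 * x₂ ^ 2 + b ^ 2 * x₁ ^ 2 * y₂ ^ 2 - b ^ 2 * x₁ * x₂ ^ 3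
      - 5 * b ^ 2 * x₁ * x₂ ^ 2 * y₂ + 2 * b ^ 2 * x₁ * x₂ * y₂ ^ 2 - 3 * b ^ 2 * x₂ ^ 3 * y₂
      + b ^ 2 * x₂ ^ 2 * y₂ ^ 2 + a * y₁ * y₂ + a * y₂ ^ 2 - 2 * b * x₁ * x₂ + 3 * b * x₁ * y₂
      - 2 * b * x₂ ^ 2 + 4 * b * x₂ * y₂ - b * y₂ ^ 2 - 1) * h₁ +
    (-b ^ 4 * x₁ ^ 5 * y₁ * x₂ * y₂ + b ^ 3 * x₁ ^ 4 * y₁ * x₂ + b ^ 3 * x₁ ^ 4 * y₁ * y₂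
      - b ^ 3 * x₁ ^ 4 * x₂ * y₂ + 3 * b ^ 3 * x₁ ^ 3 * y₁ * x₂ * y₂ - a ^ 2 * y₁ ^ 3 * y₂
      + 4 * a * b * x₁ ^ 2 * y₁ * y₂ + 4 * a * b * x₁ * y₁ * x₂ * y₂ - a * b * y₁ ^ 2 * x₂ * y₂
      + 3 * b ^ 2 * x₁ ^ 3 * y₁ + b ^ 2 * x₁ ^ 3 * y₂ + 2 * b ^ 2 * x₁ ^ 2 * y₁ * x₂
      - 2 * b ^ 2 * x₁ ^ 2 * y₁ * y₂ + 2 * b ^ 2 * x₁ ^ 2 * x₂ * y₂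
      - 2 * b ^ 2 * x₁ * y₁ * x₂ * y₂ + a * y₁ ^ 2 + a * y₁ * y₂ + 4 * b * x₁ ^ 2
      - 3 * b * x₁ * y₁ + 4 * b * x₁ * x₂ - b * x₁ * y₂ - 3 * b * y₁ * x₂ + b * y₁ * y₂ - 1) * h₂

theorem huff_affine_add_closure_general {F : Type*} [Field F] (a b : F)
    (x₁ y₁ x₂ y₂ : F)
    (h₁ : x₁ * (a * y₁ ^ 2 - 1) = y₁ * (b * x₁ ^ 2 - 1))
    (h₂ : x₂ * (a * y₂ ^ 2 - 1) = y₂ * (b * x₂ ^ 2 - 1))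
    (hden : (b * x₁ * x₂ + 1) * (a * y₁ * y₂ - 1) * (b * x₁ * x₂ - 1) * (a * y₁ * y₂ + 1) ≠ 0)
    (x₃ y₃ : F)
    (hx₃ : x₃ = (x₁ + x₂) * (a * y₁ * y₂ + 1) / ((b * x₁ * x₂ + 1) * (a * y₁ * y₂ - 1)))
    (hy₃ : y₃ = (y₁ + y₂) * (b * x₁ * x₂ + 1) / ((b * x₁ * x₂ - 1) * (a * y₁ * y₂ + 1))) :
    x₃ * (a * y₃ ^ 2 - 1) = y₃ * (b * x₃ ^ 2 - 1) := by
  obtain ⟨⟨⟨hbx_add, hay_sub⟩, hbx_sub⟩, hay_add⟩ := by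
    simpa only [ne_eq, mul_eq_zero, not_or] using hden
  subst hx₃ hy₃
  rw [huff_div_div_iff (mul_ne_zero hbx_add hay_sub) (mul_ne_zero hbx_sub hay_add)]
  linear_combination (a * y₁ * y₂ + 1) * (b * x₁ * x₂ + 1) * huff_add_polynomial_identity h₁ h₂

/-- Closure of the affine addition law on the generalized Huff curve
`x(ay² − 1) = y(bx² − 1)`. -/
theorem huff_affine_add_closure {F : Type*} [Field F] (a b : F)
    (h2 : (2 : F) ≠ 0) (ha : a ≠ 0) (hb : b ≠ 0) (hab : a ≠ b)
    (x₁ y₁ x₂ y₂ : F)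
    (h₁ : x₁ * (a * y₁ ^ 2 - 1) = y₁ * (b * x₁ ^ 2 - 1))
    (h₂ : x₂ * (a * y₂ ^ 2 - 1) = y₂ * (b * x₂ ^ 2 - 1))
    (hden : (b * x₁ * x₂ + 1) * (a * y₁ * y₂ - 1) * (b * x₁ * x₂ - 1) * (a * y₁ * y₂ + 1) ≠ 0)
    (x₃ y₃ : F)
    (hx₃ : x₃ = (x₁ + x₂) * (a * y₁ * y₂ + 1) / ((b * x₁ * x₂ + 1) * (a * y₁ * y₂ - 1)))
    (hy₃ : y₃ = (y₁ + y₂) * (b * x₁ * x₂ + 1) / ((b * x₁ * x₂ - 1) * (a * y₁ * y₂ + 1))) :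
    x₃ * (a * y₃ ^ 2 - 1) = y₃ * (b * x₃ ^ 2 - 1) :=
  huff_affine_add_closure_general a b x₁ y₁ x₂ y₂ h₁ h₂ hden x₃ y₃ hx₃ hy₃
end

section
/- Let F be a field of characteristic not 2 and a, b ∈ F with ab(a−b) ≠ 0. Let (x₁, y₁) be an affine point on the curve x(ay² − 1) = y(bx² − 1) with (bx₁² + 1)(ay₁² − 1)(bx₁² − 1)(ay₁² + 1) ≠ 0. Then the doubling point (x₃, y₃) with x₃ = 2x₁(ay₁² + 1)/((bx₁² + 1)(ay₁² − 1)) and y₃ = 2y₁(bx₁² + 1)/((bx₁² − 1)(ay₁² + 1)) lies on the curve x(ay² − 1) = y(bx² − 1). -/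
/-! Write `x₃ = p/q`, `y₃ = r/s` with the numerators and denominators of the doubling formula.
Cleared of denominators, the curve equation reads `pq(ar² − s²) = rs(bp² − q²)`. Here `pq` and `rs`
are `x₁(ay₁² − 1)` and `y₁(bx₁² − 1)` times the common factor `2(ay₁² + 1)(bx₁² + 1)`, and with
`u = ay₁²`, `v = bx₁²` both `ar² − s²` and `bp² − q²` equal the expression
`4u(v + 1)² − (u + 1)²(v − 1)² = 4v(u + 1)² − (v + 1)²(u − 1)²`. So the equation at the doubled
point is the equation at `(x₁, y₁)` multiplied by a polynomial. -/

theorem huff_div_iff {F : Type*} [Field F] {a b p q r s : F} (hq : q ≠ 0) (hs : s ≠ 0) :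
    p / q * (a * (r / s) ^ 2 - 1) = r / s * (b * (p / q) ^ 2 - 1) ↔
      p * q * (a * r ^ 2 - s ^ 2) = r * s * (b * p ^ 2 - q ^ 2) := by
  rw [div_pow, div_pow, mul_div_assoc', mul_div_assoc', div_sub_one (pow_ne_zero 2 hs),
    div_sub_one (pow_ne_zero 2 hq), div_mul_div_comm, div_mul_div_comm,
    div_eq_div_iff (mul_ne_zero hq (pow_ne_zero 2 hs)) (mul_ne_zero hs (pow_ne_zero 2 hq))]
  constructor <;> intro h
  · exact mul_right_cancel₀ (mul_ne_zero hq hs) (by linear_combination h)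
  · linear_combination q * s * h

theorem huff_affine_double_closure_general {F : Type*} [Field F] (a b : F)
    (x₁ y₁ : F)
    (h₁ : x₁ * (a * y₁ ^ 2 - 1) = y₁ * (b * x₁ ^ 2 - 1))
    (hden : (b * x₁ ^ 2 + 1) * (a * y₁ ^ 2 - 1) * (b * x₁ ^ 2 - 1) * (a * y₁ ^ 2 + 1) ≠ 0)
    (x₃ y₃ : F)
    (hx₃ : x₃ = 2 * x₁ * (a * y₁ ^ 2 + 1) / ((b * x₁ ^ 2 + 1) * (a * y₁ ^ 2 - 1)))
    (hy₃ : y₃ = 2 * y₁ * (b * x₁ ^ 2 + 1) / ((b * x₁ ^ 2 - 1) * (a * y₁ ^ 2 + 1))) :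
    x₃ * (a * y₃ ^ 2 - 1) = y₃ * (b * x₃ ^ 2 - 1) := by
  have hq : (b * x₁ ^ 2 + 1) * (a * y₁ ^ 2 - 1) ≠ 0 := fun h => hden (by rw [h]; ring)
  have hs : (b * x₁ ^ 2 - 1) * (a * y₁ ^ 2 + 1) ≠ 0 := fun h => hden (by rw [mul_assoc, h]; ring)
  rw [hx₃, hy₃, huff_div_iff hq hs]
  linear_combination 2 * (a * y₁ ^ 2 + 1) * (b * x₁ ^ 2 + 1) *
    (4 * a * y₁ ^ 2 * (b * x₁ ^ 2 + 1) ^ 2 - (a * y₁ ^ 2 + 1) ^ 2 * (b * x₁ ^ 2 - 1) ^ 2) * h₁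

/-- Closure of the affine doubling formula on the generalized Huff curve
`x(ay² − 1) = y(bx² − 1)`. -/
theorem huff_affine_double_closure {F : Type*} [Field F] (a b : F)
    (h2 : (2 : F) ≠ 0) (ha : a ≠ 0) (hb : b ≠ 0) (hab : a ≠ b)
    (x₁ y₁ : F)
    (h₁ : x₁ * (a * y₁ ^ 2 - 1) = y₁ * (b * x₁ ^ 2 - 1))
    (hden : (b * x₁ ^ 2 + 1) * (a * y₁ ^ 2 - 1) * (b * x₁ ^ 2 - 1) * (a * y₁ ^ 2 + 1) ≠ 0)
    (x₃ y₃ : F)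
    (hx₃ : x₃ = 2 * x₁ * (a * y₁ ^ 2 + 1) / ((b * x₁ ^ 2 + 1) * (a * y₁ ^ 2 - 1)))
    (hy₃ : y₃ = 2 * y₁ * (b * x₁ ^ 2 + 1) / ((b * x₁ ^ 2 - 1) * (a * y₁ ^ 2 + 1))) :
    x₃ * (a * y₃ ^ 2 - 1) = y₃ * (b * x₃ ^ 2 - 1) :=
  huff_affine_double_closure_general a b x₁ y₁ h₁ hden x₃ y₃ hx₃ hy₃
end

section
/- Let F be a field of characteristic not 2 and a, b ∈ F with ab(a−b) ≠ 0. For projective points P₁ = (X₁:Y₁:Z₁) and P₂ = (X₂:Y₂:Z₂) on X(aY² − Z²) = Y(bX² − Z²), the projective point (X₃, Y₃, Z₃) with X₃ = (X₁Z₂ + X₂Z₁)(aY₁Y₂ + Z₁Z₂)²(Z₁Z₂ − bX₁X₂), Y₃ = (Y₁Z₂ + Y₂Z₁)(bX₁X₂ + Z₁Z₂)²(Z₁Z₂ − aY₁Y₂), Z₃ = (b²X₁²X₂² − Z₁²Z₂²)(a²Y₁²Y₂² − Z₁²Z₂²) satisfies X₃(aY₃² − Z₃²) = Y₃(bX₃²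 − Z₃²). -/
set_option maxHeartbeats 4000000
set_option maxRecDepth 20000

/-- Closure of the projective addition law on the generalized Huff curve
`X(aY² − Z²) = Y(bX² − Z²)`. -/
theorem huff_projective_add_closure {F : Type*} [Field F] (a b : F)
    (h2 : (2 : F) ≠ 0) (ha : a ≠ 0) (hb : b ≠ 0) (hab : a ≠ b)
    (X₁ Y₁ Z₁ X₂ Y₂ Z₂ : F)
    (h₁ : X₁ * (a * Y₁ ^ 2 - Z₁ ^ 2) = Y₁ * (b * X₁ ^ 2 - Z₁ ^ 2))
    (h₂ : X₂ * (a * Y₂ ^ 2 - Z₂ ^ 2) = Y₂ * (b * X₂ ^ 2 - Z₂ ^ 2))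
    (X₃ Y₃ Z₃ : F)
    (hX₃ : X₃ = (X₁ * Z₂ + X₂ * Z₁) * (a * Y₁ * Y₂ + Z₁ * Z₂) ^ 2 * (Z₁ * Z₂ - b * X₁ * X₂))
    (hY₃ : Y₃ = (Y₁ * Z₂ + Y₂ * Z₁) * (b * X₁ * X₂ + Z₁ * Z₂) ^ 2 * (Z₁ * Z₂ - a * Y₁ * Y₂))
    (hZ₃ : Z₃ = (b ^ 2 * X₁ ^ 2 * X₂ ^ 2 - Z₁ ^ 2 * Z₂ ^ 2) *
                 (a ^ 2 * Y₁ ^ 2 * Y₂ ^ 2 - Z₁ ^ 2 * Z₂ ^ 2)) :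
    X₃ * (a * Y₃ ^ 2 - Z₃ ^ 2) = Y₃ * (b * X₃ ^ 2 - Z₃ ^ 2) := by
  subst hX₃ hY₃ hZ₃
  linear_combination
    ((1)*Z₁^9*Z₂^12 + (4)*b*Z₁^9*Y₂^2*Z₂^10 + (-8)*b*Z₁^9*X₂*Y₂*Z₂^10 + (3)*b*Z₁^9*X₂^2*Z₂^10 + (-3)*b*X₁*Z₁^8*Y₂*Z₂^11 + (3)*b*X₁*Z₁^8*X₂*Z₂^11 + (8)*b^2*Z₁^9*Y₂^4*Z₂^8 + (-8)*b^2*Z₁^9*X₂*Y₂^3*Z₂^8 + (-4)*b^2*X₁*Z₁^8*Y₂^3*Z₂^9 + (4)*b^2*X₁*Z₁^8*X₂*Y₂^2*Z₂^9 + (1)*b^2*X₁*Z₁^8*X₂^2*Y₂*Z₂^9 + (2)*b^2*X₁*Z₁^8*X₂^3*Z₂^9 + (-4)*b^2*X₁^2*Z₁^7*Y₂^2*Z₂^10 + (2)*b^2*X₁^2*Z₁^7*X₂^2*Z₂^10 + (4)*b^3*Z₁^9*X₂^2*Y₂^4*Z₂^6 + (-16)*b^3*Z₁^9*X₂^3*Y₂^3*Z₂^6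 + (5)*b^3*X₁*Z₁^8*Y₂^5*Z₂^7 + (-1)*b^3*X₁*Z₁^8*X₂*Y₂^4*Z₂^7 + (-4)*b^3*X₁*Z₁^8*X₂^3*Y₂^2*Z₂^7 + (6)*b^3*X₁*Z₁^8*X₂^4*Y₂*Z₂^7 + (-12)*b^3*X₁^2*Z₁^7*Y₂^4*Z₂^8 + (8)*b^3*X₁^2*Z₁^7*X₂*Y₂^3*Z₂^8 + (16)*b^3*X₁^2*Z₁^7*X₂^3*Y₂*Z₂^8 + (-2)*b^3*X₁^2*Z₁^7*X₂^4*Z₂^8 + (2)*b^3*X₁^3*Z₁^6*Y₂^3*Z₂^9 + (-6)*b^3*X₁^3*Z₁^6*X₂*Y₂^2*Z₂^9 + (6)*b^3*X₁^3*Z₁^6*X₂^2*Y₂*Z₂^9 + (-2)*b^3*X₁^3*Z₁^6*X₂^3*Z₂^9 + (-8)*b^4*Z₁^9*X₂^4*Y₂^4*Z₂^4 + (13)*b^4*X₁*Z₁^8*X₂^2*Y₂^5*Z₂^5 + (-30)*b^4*X₁*Z₁^8*X₂^3*Y₂^4*Z₂^5 + (6)*b^4*X₁*Z₁^8*X₂^4*Y₂^3*Z₂^5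 + (6)*b^4*X₁*Z₁^8*X₂^5*Y₂^2*Z₂^5 + (-12)*b^4*X₁^2*Z₁^7*X₂^2*Y₂^4*Z₂^6 + (32)*b^4*X₁^2*Z₁^7*X₂^3*Y₂^3*Z₂^6 + (-4)*b^4*X₁^3*Z₁^6*Y₂^5*Z₂^7 + (-4)*b^4*X₁^3*Z₁^6*X₂*Y₂^4*Z₂^7 + (6)*b^4*X₁^3*Z₁^6*X₂^2*Y₂^3*Z₂^7 + (4)*b^4*X₁^3*Z₁^6*X₂^3*Y₂^2*Z₂^7 + (1)*b^4*X₁^3*Z₁^6*X₂^4*Y₂*Z₂^7 + (-3)*b^4*X₁^3*Z₁^6*X₂^5*Z₂^7 + (4)*b^4*X₁^4*Z₁^5*Y₂^4*Z₂^8 + (-3)*b^4*X₁^4*Z₁^5*X₂^4*Z₂^8 + (-4)*b^5*Z₁^9*X₂^6*Y₂^4*Z₂^2 + (-13)*b^5*X₁*Z₁^8*X₂^4*Y₂^5*Z₂^3 + (3)*b^5*X₁*Z₁^8*X₂^5*Y₂^4*Z₂^3 + (2)*b^5*X₁*Z₁^8*X₂^6*Y₂^3*Z₂^3 + (12)*b^5*X₁^2*Z₁^7*X₂^4*Y₂^4*Z₂^4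 + (8)*b^5*X₁^2*Z₁^7*X₂^5*Y₂^3*Z₂^4 + (4)*b^5*X₁^2*Z₁^7*X₂^6*Y₂^2*Z₂^4 + (-16)*b^5*X₁^3*Z₁^6*X₂^2*Y₂^5*Z₂^5 + (28)*b^5*X₁^3*Z₁^6*X₂^3*Y₂^4*Z₂^5 + (2)*b^5*X₁^3*Z₁^6*X₂^4*Y₂^3*Z₂^5 + (-2)*b^5*X₁^3*Z₁^6*X₂^5*Y₂^2*Z₂^5 + (-3)*b^5*X₁^3*Z₁^6*X₂^6*Y₂*Z₂^5 + (12)*b^5*X₁^4*Z₁^5*X₂^2*Y₂^4*Z₂^6 + (-16)*b^5*X₁^4*Z₁^5*X₂^3*Y₂^3*Z₂^6 + (-4)*b^5*X₁^4*Z₁^5*X₂^4*Y₂^2*Z₂^6 + (-8)*b^5*X₁^4*Z₁^5*X₂^5*Y₂*Z₂^6 + (-1)*b^5*X₁^4*Z₁^5*X₂^6*Z₂^6 + (1)*b^5*X₁^5*Z₁^4*Y₂^5*Z₂^7 + (3)*b^5*X₁^5*Z₁^4*X₂*Y₂^4*Z₂^7 + (-4)*b^5*X₁^5*Z₁^4*X₂^2*Y₂^3*Z₂^7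 + (4)*b^5*X₁^5*Z₁^4*X₂^3*Y₂^2*Z₂^7 + (-3)*b^5*X₁^5*Z₁^4*X₂^4*Y₂*Z₂^7 + (-1)*b^5*X₁^5*Z₁^4*X₂^5*Z₂^7 + (-5)*b^6*X₁*Z₁^8*X₂^6*Y₂^5*Z₂ + (12)*b^6*X₁^2*Z₁^7*X₂^6*Y₂^4*Z₂^2 + (10)*b^6*X₁^3*Z₁^6*X₂^4*Y₂^5*Z₂^3 + (10)*b^6*X₁^3*Z₁^6*X₂^5*Y₂^4*Z₂^3 + (-2)*b^6*X₁^3*Z₁^6*X₂^6*Y₂^3*Z₂^3 + (-4)*b^6*X₁^4*Z₁^5*X₂^4*Y₂^4*Z₂^4 + (-16)*b^6*X₁^4*Z₁^5*X₂^5*Y₂^3*Z₂^4 + (-4)*b^6*X₁^4*Z₁^5*X₂^6*Y₂^2*Z₂^4 + (9)*b^6*X₁^5*Z₁^4*X₂^2*Y₂^5*Z₂^5 + (-6)*b^6*X₁^5*Z₁^4*X₂^3*Y₂^4*Z₂^5 + (-6)*b^6*X₁^5*Z₁^4*X₂^4*Y₂^3*Z₂^5 + (-6)*b^6*X₁^5*Z₁^4*X₂^5*Y₂^2*Z₂^5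 + (-1)*b^6*X₁^5*Z₁^4*X₂^6*Y₂*Z₂^5 + (-4)*b^6*X₁^6*Z₁^3*X₂^2*Y₂^4*Z₂^6 + (4)*b^6*X₁^6*Z₁^3*X₂^4*Y₂^2*Z₂^6 + (10)*b^7*X₁^3*Z₁^6*X₂^6*Y₂^5*Z₂ + (-12)*b^7*X₁^4*Z₁^5*X₂^6*Y₂^4*Z₂^2 + (-18)*b^7*X₁^5*Z₁^4*X₂^5*Y₂^4*Z₂^3 + (-2)*b^7*X₁^5*Z₁^4*X₂^6*Y₂^3*Z₂^3 + (8)*b^7*X₁^6*Z₁^3*X₂^5*Y₂^3*Z₂^4 + (-2)*b^7*X₁^7*Z₁^2*X₂^2*Y₂^5*Z₂^5 + (-2)*b^7*X₁^7*Z₁^2*X₂^3*Y₂^4*Z₂^5 + (2)*b^7*X₁^7*Z₁^2*X₂^4*Y₂^3*Z₂^5 + (2)*b^7*X₁^7*Z₁^2*X₂^5*Y₂^2*Z₂^5 + (-10)*b^8*X₁^5*Z₁^4*X₂^6*Y₂^5*Z₂ + (4)*b^8*X₁^6*Z₁^3*X₂^6*Y₂^4*Z₂^2 + (-3)*b^8*X₁^7*Z₁^2*X₂^4*Y₂^5*Z₂^3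 + (9)*b^8*X₁^7*Z₁^2*X₂^5*Y₂^4*Z₂^3 + (2)*b^8*X₁^7*Z₁^2*X₂^6*Y₂^3*Z₂^3 + (5)*b^9*X₁^7*Z₁^2*X₂^6*Y₂^5*Z₂ + (1)*b^9*X₁^9*X₂^4*Y₂^5*Z₂^3 + (-1)*b^9*X₁^9*X₂^5*Y₂^4*Z₂^3 + (-1)*b^10*X₁^9*X₂^6*Y₂^5*Z₂ + (-1)*a*Z₁^9*Y₂^2*Z₂^10 + (-12)*a*b*Z₁^9*Y₂^4*Z₂^8 + (16)*a*b*Z₁^9*X₂*Y₂^3*Z₂^8 + (-7)*a*b*Z₁^9*X₂^2*Y₂^2*Z₂^8 + (-2)*a*b*Y₁*Z₁^8*Y₂^3*Z₂^9 + (-2)*a*b*Y₁*Z₁^8*X₂*Y₂^2*Z₂^9 + (-7)*a*b*X₁*Z₁^8*X₂*Y₂^2*Z₂^9 + (-4)*a*b*X₁*Y₁*Z₁^7*Y₂^2*Z₂^10 + (8)*a*b^2*Z₁^9*X₂*Y₂^5*Z₂^6 + (16)*a*b^2*Z₁^9*X₂^3*Y₂^3*Z₂^6 + (2)*a*b^2*Y₁*Z₁^8*Y₂^5*Z₂^7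 + (-2)*a*b^2*Y₁*Z₁^8*X₂*Y₂^4*Z₂^7 + (2)*a*b^2*Y₁*Z₁^8*X₂^2*Y₂^3*Z₂^7 + (4)*a*b^2*Y₁*Z₁^8*X₂^3*Y₂^2*Z₂^7 + (-12)*a*b^2*X₁*Z₁^8*Y₂^5*Z₂^7 + (8)*a*b^2*X₁*Z₁^8*X₂*Y₂^4*Z₂^7 + (-6)*a*b^2*X₁*Z₁^8*X₂^3*Y₂^2*Z₂^7 + (-8)*a*b^2*X₁*Y₁*Z₁^7*Y₂^4*Z₂^8 + (8)*a*b^2*X₁*Y₁*Z₁^7*X₂*Y₂^3*Z₂^8 + (12)*a*b^2*X₁^2*Z₁^7*Y₂^4*Z₂^8 + (-16)*a*b^2*X₁^2*Z₁^7*X₂*Y₂^3*Z₂^8 + (-6)*a*b^2*X₁^2*Z₁^7*X₂^2*Y₂^2*Z₂^8 + (2)*a*b^2*X₁^2*Y₁*Z₁^6*Y₂^3*Z₂^9 + (-6)*a*b^2*X₁^2*Y₁*Z₁^6*X₂*Y₂^2*Z₂^9 + (8)*a*b^3*Z₁^9*X₂^3*Y₂^5*Z₂^4 + (12)*a*b^3*Z₁^9*X₂^4*Y₂^4*Z₂^4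 + (4)*a*b^3*Y₁*Z₁^8*X₂^2*Y₂^5*Z₂^5 + (-10)*a*b^3*Y₁*Z₁^8*X₂^3*Y₂^4*Z₂^5 + (4)*a*b^3*Y₁*Z₁^8*X₂^4*Y₂^3*Z₂^5 + (5)*a*b^3*X₁*Z₁^8*X₂*Y₂^6*Z₂^5 + (-8)*a*b^3*X₁*Z₁^8*X₂^2*Y₂^5*Z₂^5 + (36)*a*b^3*X₁*Z₁^8*X₂^3*Y₂^4*Z₂^5 + (-16)*a*b^3*X₁*Z₁^8*X₂^4*Y₂^3*Z₂^5 + (-4)*a*b^3*X₁*Y₁*Z₁^7*X₂^2*Y₂^4*Z₂^6 + (16)*a*b^3*X₁*Y₁*Z₁^7*X₂^3*Y₂^3*Z₂^6 + (-16)*a*b^3*X₁^2*Z₁^7*X₂*Y₂^5*Z₂^6 + (12)*a*b^3*X₁^2*Z₁^7*X₂^2*Y₂^4*Z₂^6 + (-32)*a*b^3*X₁^2*Z₁^7*X₂^3*Y₂^3*Z₂^6 + (6)*a*b^3*X₁^2*Z₁^7*X₂^4*Y₂^2*Z₂^6 + (-3)*a*b^3*X₁^2*Y₁*Z₁^6*Y₂^5*Z₂^7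 + (-1)*a*b^3*X₁^2*Y₁*Z₁^6*X₂*Y₂^4*Z₂^7 + (2)*a*b^3*X₁^2*Y₁*Z₁^6*X₂^2*Y₂^3*Z₂^7 + (8)*a*b^3*X₁^2*Y₁*Z₁^6*X₂^3*Y₂^2*Z₂^7 + (6)*a*b^3*X₁^3*Z₁^6*Y₂^5*Z₂^7 + (8)*a*b^3*X₁^3*Z₁^6*X₂*Y₂^4*Z₂^7 + (-16)*a*b^3*X₁^3*Z₁^6*X₂^2*Y₂^3*Z₂^7 + (6)*a*b^3*X₁^3*Z₁^6*X₂^3*Y₂^2*Z₂^7 + (4)*a*b^3*X₁^3*Y₁*Z₁^5*Y₂^4*Z₂^8 + (8)*a*b^4*Z₁^9*X₂^5*Y₂^5*Z₂^2 + (-5)*a*b^4*Y₁*Z₁^8*X₂^4*Y₂^5*Z₂^3 + (3)*a*b^4*Y₁*Z₁^8*X₂^5*Y₂^4*Z₂^3 + (18)*a*b^4*X₁*Z₁^8*X₂^3*Y₂^6*Z₂^3 + (10)*a*b^4*X₁*Z₁^8*X₂^4*Y₂^5*Z₂^3 + (-8)*a*b^4*X₁*Z₁^8*X₂^5*Y₂^4*Z₂^3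 + (8)*a*b^4*X₁*Y₁*Z₁^7*X₂^4*Y₂^4*Z₂^4 + (-16)*a*b^4*X₁^2*Z₁^7*X₂^3*Y₂^5*Z₂^4 + (-12)*a*b^4*X₁^2*Z₁^7*X₂^4*Y₂^4*Z₂^4 + (-16)*a*b^4*X₁^2*Z₁^7*X₂^5*Y₂^3*Z₂^4 + (-9)*a*b^4*X₁^2*Y₁*Z₁^6*X₂^2*Y₂^5*Z₂^5 + (20)*a*b^4*X₁^2*Y₁*Z₁^6*X₂^3*Y₂^4*Z₂^5 + (-2)*a*b^4*X₁^2*Y₁*Z₁^6*X₂^4*Y₂^3*Z₂^5 + (-6)*a*b^4*X₁^2*Y₁*Z₁^6*X₂^5*Y₂^2*Z₂^5 + (-4)*a*b^4*X₁^3*Z₁^6*X₂*Y₂^6*Z₂^5 + (10)*a*b^4*X₁^3*Z₁^6*X₂^2*Y₂^5*Z₂^5 + (-36)*a*b^4*X₁^3*Z₁^6*X₂^3*Y₂^4*Z₂^5 + (7)*a*b^4*X₁^3*Z₁^6*X₂^5*Y₂^2*Z₂^5 + (8)*a*b^4*X₁^3*Y₁*Z₁^5*X₂^2*Y₂^4*Z₂^6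 + (-16)*a*b^4*X₁^3*Y₁*Z₁^5*X₂^3*Y₂^3*Z₂^6 + (8)*a*b^4*X₁^4*Z₁^5*X₂*Y₂^5*Z₂^6 + (-12)*a*b^4*X₁^4*Z₁^5*X₂^2*Y₂^4*Z₂^6 + (16)*a*b^4*X₁^4*Z₁^5*X₂^3*Y₂^3*Z₂^6 + (7)*a*b^4*X₁^4*Z₁^5*X₂^4*Y₂^2*Z₂^6 + (1)*a*b^4*X₁^4*Y₁*Z₁^4*Y₂^5*Z₂^7 + (3)*a*b^4*X₁^4*Y₁*Z₁^4*X₂*Y₂^4*Z₂^7 + (-4)*a*b^4*X₁^4*Y₁*Z₁^4*X₂^2*Y₂^3*Z₂^7 + (4)*a*b^4*X₁^4*Y₁*Z₁^4*X₂^3*Y₂^2*Z₂^7 + (-1)*a*b^5*Y₁*Z₁^8*X₂^6*Y₂^5*Z₂ + (5)*a*b^5*X₁*Z₁^8*X₂^5*Y₂^6*Z₂ + (6)*a*b^5*X₁*Z₁^8*X₂^6*Y₂^5*Z₂ + (4)*a*b^5*X₁*Y₁*Z₁^7*X₂^6*Y₂^4*Z₂^2 + (-16)*a*b^5*X₁^2*Z₁^7*X₂^5*Y₂^5*Z₂^2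 + (-12)*a*b^5*X₁^2*Z₁^7*X₂^6*Y₂^4*Z₂^2 + (8)*a*b^5*X₁^2*Y₁*Z₁^6*X₂^4*Y₂^5*Z₂^3 + (-2)*a*b^5*X₁^2*Y₁*Z₁^6*X₂^6*Y₂^3*Z₂^3 + (-20)*a*b^5*X₁^3*Z₁^6*X₂^3*Y₂^6*Z₂^3 + (-10)*a*b^5*X₁^3*Z₁^6*X₂^4*Y₂^5*Z₂^3 + (-12)*a*b^5*X₁^3*Z₁^6*X₂^5*Y₂^4*Z₂^3 + (-4)*a*b^5*X₁^3*Y₁*Z₁^5*X₂^4*Y₂^4*Z₂^4 + (-8)*a*b^5*X₁^3*Y₁*Z₁^5*X₂^5*Y₂^3*Z₂^4 + (-4)*a*b^5*X₁^3*Y₁*Z₁^5*X₂^6*Y₂^2*Z₂^4 + (16)*a*b^5*X₁^4*Z₁^5*X₂^3*Y₂^5*Z₂^4 + (16)*a*b^5*X₁^4*Z₁^5*X₂^5*Y₂^3*Z₂^4 + (1)*a*b^5*X₁^4*Z₁^5*X₂^6*Y₂^2*Z₂^4 + (7)*a*b^5*X₁^4*Y₁*Z₁^4*X₂^2*Y₂^5*Z₂^5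 + (-8)*a*b^5*X₁^4*Y₁*Z₁^4*X₂^3*Y₂^4*Z₂^5 + (-4)*a*b^5*X₁^4*Y₁*Z₁^4*X₂^4*Y₂^3*Z₂^5 + (-4)*a*b^5*X₁^4*Y₁*Z₁^4*X₂^5*Y₂^2*Z₂^5 + (1)*a*b^5*X₁^5*Z₁^4*X₂*Y₂^6*Z₂^5 + (-4)*a*b^5*X₁^5*Z₁^4*X₂^2*Y₂^5*Z₂^5 + (-4)*a*b^5*X₁^5*Z₁^4*X₂^3*Y₂^4*Z₂^5 + (16)*a*b^5*X₁^5*Z₁^4*X₂^4*Y₂^3*Z₂^5 + (1)*a*b^5*X₁^5*Z₁^4*X₂^5*Y₂^2*Z₂^5 + (-4)*a*b^5*X₁^5*Y₁*Z₁^3*X₂^2*Y₂^4*Z₂^6 + (4)*a*b^5*X₁^5*Y₁*Z₁^3*X₂^4*Y₂^2*Z₂^6 + (4)*a*b^6*X₁^2*Y₁*Z₁^6*X₂^6*Y₂^5*Z₂ + (-10)*a*b^6*X₁^3*Z₁^6*X₂^5*Y₂^6*Z₂ + (-14)*a*b^6*X₁^3*Z₁^6*X₂^6*Y₂^5*Z₂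 + (-8)*a*b^6*X₁^3*Y₁*Z₁^5*X₂^6*Y₂^4*Z₂^2 + (8)*a*b^6*X₁^4*Z₁^5*X₂^5*Y₂^5*Z₂^2 + (12)*a*b^6*X₁^4*Z₁^5*X₂^6*Y₂^4*Z₂^2 + (-2)*a*b^6*X₁^4*Y₁*Z₁^4*X₂^4*Y₂^5*Z₂^3 + (-10)*a*b^6*X₁^4*Y₁*Z₁^4*X₂^5*Y₂^4*Z₂^3 + (10)*a*b^6*X₁^5*Z₁^4*X₂^3*Y₂^6*Z₂^3 + (6)*a*b^6*X₁^5*Z₁^4*X₂^4*Y₂^5*Z₂^3 + (24)*a*b^6*X₁^5*Z₁^4*X₂^5*Y₂^4*Z₂^3 + (8)*a*b^6*X₁^5*Y₁*Z₁^3*X₂^5*Y₂^3*Z₂^4 + (-8)*a*b^6*X₁^6*Z₁^3*X₂^3*Y₂^5*Z₂^4 + (-2)*a*b^6*X₁^6*Y₁*Z₁^2*X₂^2*Y₂^5*Z₂^5 + (-2)*a*b^6*X₁^6*Y₁*Z₁^2*X₂^3*Y₂^4*Z₂^5 + (2)*a*b^6*X₁^6*Y₁*Z₁^2*X₂^4*Y₂^3*Z₂^5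 + (2)*a*b^6*X₁^6*Y₁*Z₁^2*X₂^5*Y₂^2*Z₂^5 + (-6)*a*b^7*X₁^4*Y₁*Z₁^4*X₂^6*Y₂^5*Z₂ + (10)*a*b^7*X₁^5*Z₁^4*X₂^5*Y₂^6*Z₂ + (10)*a*b^7*X₁^5*Z₁^4*X₂^6*Y₂^5*Z₂ + (4)*a*b^7*X₁^5*Y₁*Z₁^3*X₂^6*Y₂^4*Z₂^2 + (-2)*a*b^7*X₁^6*Y₁*Z₁^2*X₂^4*Y₂^5*Z₂^3 + (8)*a*b^7*X₁^6*Y₁*Z₁^2*X₂^5*Y₂^4*Z₂^3 + (2)*a*b^7*X₁^6*Y₁*Z₁^2*X₂^6*Y₂^3*Z₂^3 + (-2)*a*b^7*X₁^7*Z₁^2*X₂^3*Y₂^6*Z₂^3 + (-2)*a*b^7*X₁^7*Z₁^2*X₂^4*Y₂^5*Z₂^3 + (-4)*a*b^7*X₁^7*Z₁^2*X₂^5*Y₂^4*Z₂^3 + (4)*a*b^8*X₁^6*Y₁*Z₁^2*X₂^6*Y₂^5*Z₂ + (-5)*a*b^8*X₁^7*Z₁^2*X₂^5*Y₂^6*Z₂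 + (-2)*a*b^8*X₁^7*Z₁^2*X₂^6*Y₂^5*Z₂ + (1)*a*b^8*X₁^8*Y₁*X₂^4*Y₂^5*Z₂^3 + (-1)*a*b^8*X₁^8*Y₁*X₂^5*Y₂^4*Z₂^3 + (-1)*a*b^9*X₁^8*Y₁*X₂^6*Y₂^5*Z₂ + (1)*a*b^9*X₁^9*X₂^5*Y₂^6*Z₂ + (-2)*a^2*Y₁^2*Z₁^7*Y₂^2*Z₂^10 + (-8)*a^2*b*Z₁^9*X₂*Y₂^5*Z₂^6 + (-4)*a^2*b*Z₁^9*X₂^2*Y₂^4*Z₂^6 + (-5)*a^2*b*Y₁*Z₁^8*Y₂^5*Z₂^7 + (11)*a^2*b*Y₁*Z₁^8*X₂*Y₂^4*Z₂^7 + (-16)*a^2*b*Y₁*Z₁^8*X₂^2*Y₂^3*Z₂^7 + (-4)*a^2*b*Y₁^2*Z₁^7*Y₂^4*Z₂^8 + (8)*a^2*b*Y₁^2*Z₁^7*X₂*Y₂^3*Z₂^8 + (-6)*a^2*b*Y₁^2*Z₁^7*X₂^2*Y₂^2*Z₂^8 + (4)*a^2*b*X₁*Z₁^8*Y₂^5*Z₂^7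 + (-4)*a^2*b*X₁*Z₁^8*X₂*Y₂^4*Z₂^7 + (8)*a^2*b*X₁*Y₁*Z₁^7*Y₂^4*Z₂^8 + (-16)*a^2*b*X₁*Y₁*Z₁^7*X₂*Y₂^3*Z₂^8 + (2)*a^2*b*X₁*Y₁^2*Z₁^6*Y₂^3*Z₂^9 + (-6)*a^2*b*X₁*Y₁^2*Z₁^6*X₂*Y₂^2*Z₂^9 + (-16)*a^2*b^2*Z₁^9*X₂^3*Y₂^5*Z₂^4 + (2)*a^2*b^2*Y₁*Z₁^8*X₂*Y₂^6*Z₂^5 + (-1)*a^2*b^2*Y₁*Z₁^8*X₂^2*Y₂^5*Z₂^5 + (-2)*a^2*b^2*Y₁*Z₁^8*X₂^3*Y₂^4*Z₂^5 + (-12)*a^2*b^2*X₁*Z₁^8*X₂*Y₂^6*Z₂^5 + (-4)*a^2*b^2*X₁*Z₁^8*X₂^3*Y₂^4*Z₂^5 + (-8)*a^2*b^2*X₁*Y₁*Z₁^7*X₂*Y₂^5*Z₂^6 + (-16)*a^2*b^2*X₁*Y₁*Z₁^7*X₂^3*Y₂^3*Z₂^6 + (-2)*a^2*b^2*X₁*Y₁^2*Z₁^6*Y₂^5*Z₂^7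 + (2)*a^2*b^2*X₁*Y₁^2*Z₁^6*X₂*Y₂^4*Z₂^7 + (-2)*a^2*b^2*X₁*Y₁^2*Z₁^6*X₂^2*Y₂^3*Z₂^7 + (-4)*a^2*b^2*X₁*Y₁^2*Z₁^6*X₂^3*Y₂^2*Z₂^7 + (16)*a^2*b^2*X₁^2*Z₁^7*X₂*Y₂^5*Z₂^6 + (-4)*a^2*b^2*X₁^2*Z₁^7*X₂^2*Y₂^4*Z₂^6 + (5)*a^2*b^2*X₁^2*Y₁*Z₁^6*Y₂^5*Z₂^7 + (5)*a^2*b^2*X₁^2*Y₁*Z₁^6*X₂*Y₂^4*Z₂^7 + (-16)*a^2*b^2*X₁^2*Y₁*Z₁^6*X₂^2*Y₂^3*Z₂^7 + (4)*a^2*b^2*X₁^2*Y₁^2*Z₁^5*Y₂^4*Z₂^8 + (-4)*a^2*b^2*X₁^2*Y₁^2*Z₁^5*X₂^2*Y₂^2*Z₂^8 + (-4)*a^2*b^3*Z₁^9*X₂^4*Y₂^6*Z₂^2 + (6)*a^2*b^3*Y₁*Z₁^8*X₂^3*Y₂^6*Z₂^3 + (2)*a^2*b^3*Y₁*Z₁^8*X₂^4*Y₂^5*Z₂^3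 + (4)*a^2*b^3*Y₁^2*Z₁^7*X₂^4*Y₂^4*Z₂^4 + (-24)*a^2*b^3*X₁*Z₁^8*X₂^3*Y₂^6*Z₂^3 + (8)*a^2*b^3*X₁*Z₁^8*X₂^4*Y₂^5*Z₂^3 + (-8)*a^2*b^3*X₁*Y₁*Z₁^7*X₂^3*Y₂^5*Z₂^4 + (-8)*a^2*b^3*X₁*Y₁*Z₁^7*X₂^4*Y₂^4*Z₂^4 + (-4)*a^2*b^3*X₁*Y₁^2*Z₁^6*X₂^2*Y₂^5*Z₂^5 + (10)*a^2*b^3*X₁*Y₁^2*Z₁^6*X₂^3*Y₂^4*Z₂^5 + (-4)*a^2*b^3*X₁*Y₁^2*Z₁^6*X₂^4*Y₂^3*Z₂^5 + (-4)*a^2*b^3*X₁^2*Z₁^7*X₂^2*Y₂^6*Z₂^4 + (16)*a^2*b^3*X₁^2*Z₁^7*X₂^3*Y₂^5*Z₂^4 + (4)*a^2*b^3*X₁^2*Z₁^7*X₂^4*Y₂^4*Z₂^4 + (-3)*a^2*b^3*X₁^2*Y₁*Z₁^6*X₂*Y₂^6*Z₂^5 + (3)*a^2*b^3*X₁^2*Y₁*Z₁^6*X₂^2*Y₂^5*Z₂^5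 + (-28)*a^2*b^3*X₁^2*Y₁*Z₁^6*X₂^3*Y₂^4*Z₂^5 + (16)*a^2*b^3*X₁^2*Y₁*Z₁^6*X₂^4*Y₂^3*Z₂^5 + (4)*a^2*b^3*X₁^2*Y₁^2*Z₁^5*X₂^2*Y₂^4*Z₂^6 + (-16)*a^2*b^3*X₁^2*Y₁^2*Z₁^5*X₂^3*Y₂^3*Z₂^6 + (4)*a^2*b^3*X₁^2*Y₁^2*Z₁^5*X₂^4*Y₂^2*Z₂^6 + (6)*a^2*b^3*X₁^3*Z₁^6*X₂*Y₂^6*Z₂^5 + (8)*a^2*b^3*X₁^3*Z₁^6*X₂^2*Y₂^5*Z₂^5 + (4)*a^2*b^3*X₁^3*Z₁^6*X₂^3*Y₂^4*Z₂^5 + (8)*a^2*b^3*X₁^3*Y₁*Z₁^5*X₂*Y₂^5*Z₂^6 + (-8)*a^2*b^3*X₁^3*Y₁*Z₁^5*X₂^2*Y₂^4*Z₂^6 + (16)*a^2*b^3*X₁^3*Y₁*Z₁^5*X₂^3*Y₂^3*Z₂^6 + (1)*a^2*b^3*X₁^3*Y₁^2*Z₁^4*Y₂^5*Z₂^7 +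 (3)*a^2*b^3*X₁^3*Y₁^2*Z₁^4*X₂*Y₂^4*Z₂^7 + (-4)*a^2*b^3*X₁^3*Y₁^2*Z₁^4*X₂^2*Y₂^3*Z₂^7 + (4)*a^2*b^3*X₁^3*Y₁^2*Z₁^4*X₂^3*Y₂^2*Z₂^7 + (1)*a^2*b^4*Y₁*Z₁^8*X₂^5*Y₂^6*Z₂ + (-6)*a^2*b^4*X₁*Z₁^8*X₂^5*Y₂^6*Z₂ + (-8)*a^2*b^4*X₁*Y₁*Z₁^7*X₂^5*Y₂^5*Z₂^2 + (5)*a^2*b^4*X₁*Y₁^2*Z₁^6*X₂^4*Y₂^5*Z₂^3 + (-3)*a^2*b^4*X₁*Y₁^2*Z₁^6*X₂^5*Y₂^4*Z₂^3 + (4)*a^2*b^4*X₁^2*Z₁^7*X₂^4*Y₂^6*Z₂^2 + (16)*a^2*b^4*X₁^2*Z₁^7*X₂^5*Y₂^5*Z₂^2 + (-12)*a^2*b^4*X₁^2*Y₁*Z₁^6*X₂^3*Y₂^6*Z₂^3 + (-3)*a^2*b^4*X₁^2*Y₁*Z₁^6*X₂^4*Y₂^5*Z₂^3 + (5)*a^2*b^4*X₁^2*Y₁*Z₁^6*X₂^5*Y₂^4*Z₂^3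 + (-4)*a^2*b^4*X₁^2*Y₁^2*Z₁^5*X₂^4*Y₂^4*Z₂^4 + (24)*a^2*b^4*X₁^3*Z₁^6*X₂^3*Y₂^6*Z₂^3 + (4)*a^2*b^4*X₁^3*Z₁^6*X₂^5*Y₂^4*Z₂^3 + (8)*a^2*b^4*X₁^3*Y₁*Z₁^5*X₂^3*Y₂^5*Z₂^4 + (16)*a^2*b^4*X₁^3*Y₁*Z₁^5*X₂^5*Y₂^3*Z₂^4 + (5)*a^2*b^4*X₁^3*Y₁^2*Z₁^4*X₂^2*Y₂^5*Z₂^5 + (-10)*a^2*b^4*X₁^3*Y₁^2*Z₁^4*X₂^3*Y₂^4*Z₂^5 + (-2)*a^2*b^4*X₁^3*Y₁^2*Z₁^4*X₂^4*Y₂^3*Z₂^5 + (6)*a^2*b^4*X₁^3*Y₁^2*Z₁^4*X₂^5*Y₂^2*Z₂^5 + (4)*a^2*b^4*X₁^4*Z₁^5*X₂^2*Y₂^6*Z₂^4 + (-16)*a^2*b^4*X₁^4*Z₁^5*X₂^3*Y₂^5*Z₂^4 + (4)*a^2*b^4*X₁^4*Z₁^5*X₂^4*Y₂^4*Z₂^4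 + (1)*a^2*b^4*X₁^4*Y₁*Z₁^4*X₂*Y₂^6*Z₂^5 + (-2)*a^2*b^4*X₁^4*Y₁*Z₁^4*X₂^2*Y₂^5*Z₂^5 + (-2)*a^2*b^4*X₁^4*Y₁*Z₁^4*X₂^3*Y₂^4*Z₂^5 + (16)*a^2*b^4*X₁^4*Y₁*Z₁^4*X₂^4*Y₂^3*Z₂^5 + (-4)*a^2*b^4*X₁^4*Y₁^2*Z₁^3*X₂^2*Y₂^4*Z₂^6 + (6)*a^2*b^4*X₁^4*Y₁^2*Z₁^3*X₂^4*Y₂^2*Z₂^6 + (1)*a^2*b^5*X₁*Y₁^2*Z₁^6*X₂^6*Y₂^5*Z₂ + (-4)*a^2*b^5*X₁^2*Y₁*Z₁^6*X₂^5*Y₂^6*Z₂ + (-5)*a^2*b^5*X₁^2*Y₁*Z₁^6*X₂^6*Y₂^5*Z₂ + (-4)*a^2*b^5*X₁^2*Y₁^2*Z₁^5*X₂^6*Y₂^4*Z₂^2 + (14)*a^2*b^5*X₁^3*Z₁^6*X₂^5*Y₂^6*Z₂ + (4)*a^2*b^5*X₁^3*Z₁^6*X₂^6*Y₂^5*Z₂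 + (8)*a^2*b^5*X₁^3*Y₁*Z₁^5*X₂^5*Y₂^5*Z₂^2 + (8)*a^2*b^5*X₁^3*Y₁*Z₁^5*X₂^6*Y₂^4*Z₂^2 + (-3)*a^2*b^5*X₁^3*Y₁^2*Z₁^4*X₂^4*Y₂^5*Z₂^3 + (-3)*a^2*b^5*X₁^3*Y₁^2*Z₁^4*X₂^5*Y₂^4*Z₂^3 + (2)*a^2*b^5*X₁^3*Y₁^2*Z₁^4*X₂^6*Y₂^3*Z₂^3 + (4)*a^2*b^5*X₁^4*Z₁^5*X₂^4*Y₂^6*Z₂^2 + (-8)*a^2*b^5*X₁^4*Z₁^5*X₂^5*Y₂^5*Z₂^2 + (8)*a^2*b^5*X₁^4*Y₁*Z₁^4*X₂^3*Y₂^6*Z₂^3 + (4)*a^2*b^5*X₁^4*Y₁*Z₁^4*X₂^4*Y₂^5*Z₂^3 + (14)*a^2*b^5*X₁^4*Y₁*Z₁^4*X₂^5*Y₂^4*Z₂^3 + (8)*a^2*b^5*X₁^4*Y₁^2*Z₁^3*X₂^5*Y₂^3*Z₂^4 + (2)*a^2*b^5*X₁^4*Y₁^2*Z₁^3*X₂^6*Y₂^2*Z₂^4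 + (-8)*a^2*b^5*X₁^5*Z₁^4*X₂^3*Y₂^6*Z₂^3 + (-12)*a^2*b^5*X₁^5*Z₁^4*X₂^4*Y₂^5*Z₂^3 + (-8)*a^2*b^5*X₁^5*Y₁*Z₁^3*X₂^3*Y₂^5*Z₂^4 + (-2)*a^2*b^5*X₁^5*Y₁^2*Z₁^2*X₂^2*Y₂^5*Z₂^5 + (-2)*a^2*b^5*X₁^5*Y₁^2*Z₁^2*X₂^3*Y₂^4*Z₂^5 + (2)*a^2*b^5*X₁^5*Y₁^2*Z₁^2*X₂^4*Y₂^3*Z₂^5 + (2)*a^2*b^5*X₁^5*Y₁^2*Z₁^2*X₂^5*Y₂^2*Z₂^5 + (-3)*a^2*b^6*X₁^3*Y₁^2*Z₁^4*X₂^6*Y₂^5*Z₂ + (6)*a^2*b^6*X₁^4*Y₁*Z₁^4*X₂^5*Y₂^6*Z₂ + (6)*a^2*b^6*X₁^4*Y₁*Z₁^4*X₂^6*Y₂^5*Z₂ + (4)*a^2*b^6*X₁^4*Y₁^2*Z₁^3*X₂^6*Y₂^4*Z₂^2 + (-10)*a^2*b^6*X₁^5*Z₁^4*X₂^5*Y₂^6*Z₂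 + (-1)*a^2*b^6*X₁^5*Y₁^2*Z₁^2*X₂^4*Y₂^5*Z₂^3 + (7)*a^2*b^6*X₁^5*Y₁^2*Z₁^2*X₂^5*Y₂^4*Z₂^3 + (2)*a^2*b^6*X₁^5*Y₁^2*Z₁^2*X₂^6*Y₂^3*Z₂^3 + (-4)*a^2*b^6*X₁^6*Z₁^3*X₂^4*Y₂^6*Z₂^2 + (-2)*a^2*b^6*X₁^6*Y₁*Z₁^2*X₂^3*Y₂^6*Z₂^3 + (-3)*a^2*b^6*X₁^6*Y₁*Z₁^2*X₂^4*Y₂^5*Z₂^3 + (-3)*a^2*b^6*X₁^6*Y₁*Z₁^2*X₂^5*Y₂^4*Z₂^3 + (3)*a^2*b^7*X₁^5*Y₁^2*Z₁^2*X₂^6*Y₂^5*Z₂ + (-4)*a^2*b^7*X₁^6*Y₁*Z₁^2*X₂^5*Y₂^6*Z₂ + (-1)*a^2*b^7*X₁^6*Y₁*Z₁^2*X₂^6*Y₂^5*Z₂ + (2)*a^2*b^7*X₁^7*Z₁^2*X₂^5*Y₂^6*Z₂ + (1)*a^2*b^7*X₁^7*Y₁^2*X₂^4*Y₂^5*Z₂^3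 + (-1)*a^2*b^7*X₁^7*Y₁^2*X₂^5*Y₂^4*Z₂^3 + (-1)*a^2*b^8*X₁^7*Y₁^2*X₂^6*Y₂^5*Z₂ + (1)*a^2*b^8*X₁^8*Y₁*X₂^5*Y₂^6*Z₂ + (2)*a^3*Y₁^2*Z₁^7*Y₂^4*Z₂^8 + (4)*a^3*b*Z₁^9*X₂^2*Y₂^6*Z₂^4 + (-5)*a^3*b*Y₁*Z₁^8*X₂*Y₂^6*Z₂^5 + (8)*a^3*b*Y₁*Z₁^8*X₂^2*Y₂^5*Z₂^5 + (2)*a^3*b*Y₁^2*Z₁^7*X₂^2*Y₂^4*Z₂^6 + (-1)*a^3*b*Y₁^3*Z₁^6*Y₂^5*Z₂^7 + (5)*a^3*b*Y₁^3*Z₁^6*X₂*Y₂^4*Z₂^7 + (4)*a^3*b*X₁*Z₁^8*X₂*Y₂^6*Z₂^5 + (8)*a^3*b*X₁*Y₁*Z₁^7*X₂*Y₂^5*Z₂^6 + (4)*a^3*b*X₁*Y₁^2*Z₁^6*Y₂^5*Z₂^7 + (2)*a^3*b*X₁*Y₁^2*Z₁^6*X₂*Y₂^4*Z₂^7 + (4)*a^3*b*X₁*Y₁^3*Z₁^5*Y₂^4*Z₂^8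 + (-6)*a^3*b^2*Y₁*Z₁^8*X₂^3*Y₂^6*Z₂^3 + (-8)*a^3*b^2*Y₁^2*Z₁^7*X₂^3*Y₂^5*Z₂^4 + (-1)*a^3*b^2*Y₁^3*Z₁^6*X₂^2*Y₂^5*Z₂^5 + (-2)*a^3*b^2*Y₁^3*Z₁^6*X₂^3*Y₂^4*Z₂^5 + (4)*a^3*b^2*X₁*Z₁^8*X₂^3*Y₂^6*Z₂^3 + (8)*a^3*b^2*X₁*Y₁*Z₁^7*X₂^3*Y₂^5*Z₂^4 + (-2)*a^3*b^2*X₁*Y₁^2*Z₁^6*X₂*Y₂^6*Z₂^5 + (4)*a^3*b^2*X₁^2*Z₁^7*X₂^2*Y₂^6*Z₂^4 + (5)*a^3*b^2*X₁^2*Y₁*Z₁^6*X₂*Y₂^6*Z₂^5 + (8)*a^3*b^2*X₁^2*Y₁*Z₁^6*X₂^2*Y₂^5*Z₂^5 + (8)*a^3*b^2*X₁^2*Y₁^2*Z₁^5*X₂*Y₂^5*Z₂^6 + (1)*a^3*b^2*X₁^2*Y₁^3*Z₁^4*Y₂^5*Z₂^7 + (3)*a^3*b^2*X₁^2*Y₁^3*Z₁^4*X₂*Y₂^4*Z₂^7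 + (2)*a^3*b^3*Y₁^3*Z₁^6*X₂^4*Y₂^5*Z₂^3 + (4)*a^3*b^3*X₁*Y₁*Z₁^7*X₂^4*Y₂^6*Z₂^2 + (-6)*a^3*b^3*X₁*Y₁^2*Z₁^6*X₂^3*Y₂^6*Z₂^3 + (-4)*a^3*b^3*X₁*Y₁^3*Z₁^5*X₂^4*Y₂^4*Z₂^4 + (-4)*a^3*b^3*X₁^2*Z₁^7*X₂^4*Y₂^6*Z₂^2 + (12)*a^3*b^3*X₁^2*Y₁*Z₁^6*X₂^3*Y₂^6*Z₂^3 + (-8)*a^3*b^3*X₁^2*Y₁*Z₁^6*X₂^4*Y₂^5*Z₂^3 + (3)*a^3*b^3*X₁^2*Y₁^3*Z₁^4*X₂^2*Y₂^5*Z₂^5 + (-12)*a^3*b^3*X₁^2*Y₁^3*Z₁^4*X₂^3*Y₂^4*Z₂^5 + (-4)*a^3*b^3*X₁^3*Z₁^6*X₂^3*Y₂^6*Z₂^3 + (4)*a^3*b^3*X₁^3*Y₁*Z₁^5*X₂^2*Y₂^6*Z₂^4 + (-8)*a^3*b^3*X₁^3*Y₁*Z₁^5*X₂^3*Y₂^5*Z₂^4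 + (1)*a^3*b^3*X₁^3*Y₁^2*Z₁^4*X₂*Y₂^6*Z₂^5 + (-4)*a^3*b^3*X₁^3*Y₁^3*Z₁^3*X₂^2*Y₂^4*Z₂^6 + (-1)*a^3*b^4*X₁*Y₁^2*Z₁^6*X₂^5*Y₂^6*Z₂ + (5)*a^3*b^4*X₁^2*Y₁*Z₁^6*X₂^5*Y₂^6*Z₂ + (8)*a^3*b^4*X₁^2*Y₁^2*Z₁^5*X₂^5*Y₂^5*Z₂^2 + (-3)*a^3*b^4*X₁^2*Y₁^3*Z₁^4*X₂^4*Y₂^5*Z₂^3 + (3)*a^3*b^4*X₁^2*Y₁^3*Z₁^4*X₂^5*Y₂^4*Z₂^3 + (-4)*a^3*b^4*X₁^3*Z₁^6*X₂^5*Y₂^6*Z₂ + (-8)*a^3*b^4*X₁^3*Y₁*Z₁^5*X₂^5*Y₂^5*Z₂^2 + (6)*a^3*b^4*X₁^3*Y₁^2*Z₁^4*X₂^3*Y₂^6*Z₂^3 + (-2)*a^3*b^4*X₁^3*Y₁^2*Z₁^4*X₂^5*Y₂^4*Z₂^3 + (-4)*a^3*b^4*X₁^4*Z₁^5*X₂^4*Y₂^6*Z₂^2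 + (-6)*a^3*b^4*X₁^4*Y₁*Z₁^4*X₂^3*Y₂^6*Z₂^3 + (-8)*a^3*b^4*X₁^4*Y₁*Z₁^4*X₂^4*Y₂^5*Z₂^3 + (-8)*a^3*b^4*X₁^4*Y₁^2*Z₁^3*X₂^3*Y₂^5*Z₂^4 + (-2)*a^3*b^4*X₁^4*Y₁^2*Z₁^3*X₂^4*Y₂^4*Z₂^4 + (-2)*a^3*b^4*X₁^4*Y₁^3*Z₁^2*X₂^2*Y₂^5*Z₂^5 + (-2)*a^3*b^4*X₁^4*Y₁^3*Z₁^2*X₂^3*Y₂^4*Z₂^5 + (-1)*a^3*b^5*X₁^2*Y₁^3*Z₁^4*X₂^6*Y₂^5*Z₂ + (3)*a^3*b^5*X₁^3*Y₁^2*Z₁^4*X₂^5*Y₂^6*Z₂ + (4)*a^3*b^5*X₁^3*Y₁^2*Z₁^4*X₂^6*Y₂^5*Z₂ + (4)*a^3*b^5*X₁^3*Y₁^3*Z₁^3*X₂^6*Y₂^4*Z₂^2 + (-6)*a^3*b^5*X₁^4*Y₁*Z₁^4*X₂^5*Y₂^6*Z₂ + (-2)*a^3*b^5*X₁^4*Y₁^2*Z₁^3*X₂^6*Y₂^4*Z₂^2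 + (6)*a^3*b^5*X₁^4*Y₁^3*Z₁^2*X₂^5*Y₂^4*Z₂^3 + (-4)*a^3*b^5*X₁^5*Y₁*Z₁^3*X₂^4*Y₂^6*Z₂^2 + (-2)*a^3*b^5*X₁^5*Y₁^2*Z₁^2*X₂^3*Y₂^6*Z₂^3 + (-4)*a^3*b^5*X₁^5*Y₁^2*Z₁^2*X₂^4*Y₂^5*Z₂^3 + (-2)*a^3*b^5*X₁^5*Y₁^2*Z₁^2*X₂^5*Y₂^4*Z₂^3 + (2)*a^3*b^6*X₁^4*Y₁^3*Z₁^2*X₂^6*Y₂^5*Z₂ + (-3)*a^3*b^6*X₁^5*Y₁^2*Z₁^2*X₂^5*Y₂^6*Z₂ + (1)*a^3*b^6*X₁^6*Y₁*Z₁^2*X₂^5*Y₂^6*Z₂ + (1)*a^3*b^6*X₁^6*Y₁^3*X₂^4*Y₂^5*Z₂^3 + (-1)*a^3*b^6*X₁^6*Y₁^3*X₂^5*Y₂^4*Z₂^3 + (-1)*a^3*b^7*X₁^6*Y₁^3*X₂^6*Y₂^5*Z₂ + (1)*a^3*b^7*X₁^7*Y₁^2*X₂^5*Y₂^6*Z₂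 + (1)*a^4*Y₁^4*Z₁^5*Y₂^4*Z₂^8 + (4)*a^4*b*Y₁^2*Z₁^7*X₂^2*Y₂^6*Z₂^4 + (-1)*a^4*b*Y₁^3*Z₁^6*X₂*Y₂^6*Z₂^5 + (8)*a^4*b*Y₁^3*Z₁^6*X₂^2*Y₂^5*Z₂^5 + (3)*a^4*b*Y₁^4*Z₁^5*X₂^2*Y₂^4*Z₂^6 + (4)*a^4*b*X₁*Y₁^2*Z₁^6*X₂*Y₂^6*Z₂^5 + (8)*a^4*b*X₁*Y₁^3*Z₁^5*X₂*Y₂^5*Z₂^6 + (1)*a^4*b*X₁*Y₁^4*Z₁^4*Y₂^5*Z₂^7 + (3)*a^4*b*X₁*Y₁^4*Z₁^4*X₂*Y₂^4*Z₂^7 + (-2)*a^4*b^2*Y₁^3*Z₁^6*X₂^3*Y₂^6*Z₂^3 + (4)*a^4*b^2*X₁*Y₁^2*Z₁^6*X₂^3*Y₂^6*Z₂^3 + (8)*a^4*b^2*X₁*Y₁^3*Z₁^5*X₂^3*Y₂^5*Z₂^4 + (1)*a^4*b^2*X₁*Y₁^4*Z₁^4*X₂^2*Y₂^5*Z₂^5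 + (2)*a^4*b^2*X₁*Y₁^4*Z₁^4*X₂^3*Y₂^4*Z₂^5 + (4)*a^4*b^2*X₁^2*Y₁^2*Z₁^5*X₂^2*Y₂^6*Z₂^4 + (1)*a^4*b^2*X₁^2*Y₁^3*Z₁^4*X₂*Y₂^6*Z₂^5 + (8)*a^4*b^2*X₁^2*Y₁^3*Z₁^4*X₂^2*Y₂^5*Z₂^5 + (2)*a^4*b^2*X₁^2*Y₁^4*Z₁^3*X₂^2*Y₂^4*Z₂^6 + (-2)*a^4*b^3*X₁*Y₁^4*Z₁^4*X₂^4*Y₂^5*Z₂^3 + (-4)*a^4*b^3*X₁^2*Y₁^2*Z₁^5*X₂^4*Y₂^6*Z₂^2 + (4)*a^4*b^3*X₁^2*Y₁^3*Z₁^4*X₂^3*Y₂^6*Z₂^3 + (-8)*a^4*b^3*X₁^2*Y₁^3*Z₁^4*X₂^4*Y₂^5*Z₂^3 + (-2)*a^4*b^3*X₁^2*Y₁^4*Z₁^3*X₂^4*Y₂^4*Z₂^4 + (-4)*a^4*b^3*X₁^3*Y₁^2*Z₁^4*X₂^3*Y₂^6*Z₂^3 + (-8)*a^4*b^3*X₁^3*Y₁^3*Z₁^3*X₂^3*Y₂^5*Z₂^4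 + (-2)*a^4*b^3*X₁^3*Y₁^4*Z₁^2*X₂^2*Y₂^5*Z₂^5 + (-2)*a^4*b^3*X₁^3*Y₁^4*Z₁^2*X₂^3*Y₂^4*Z₂^5 + (1)*a^4*b^4*X₁^2*Y₁^3*Z₁^4*X₂^5*Y₂^6*Z₂ + (-4)*a^4*b^4*X₁^3*Y₁^2*Z₁^4*X₂^5*Y₂^6*Z₂ + (-8)*a^4*b^4*X₁^3*Y₁^3*Z₁^3*X₂^5*Y₂^5*Z₂^2 + (1)*a^4*b^4*X₁^3*Y₁^4*Z₁^2*X₂^4*Y₂^5*Z₂^3 + (-3)*a^4*b^4*X₁^3*Y₁^4*Z₁^2*X₂^5*Y₂^4*Z₂^3 + (-4)*a^4*b^4*X₁^4*Y₁^2*Z₁^3*X₂^4*Y₂^6*Z₂^2 + (-2)*a^4*b^4*X₁^4*Y₁^3*Z₁^2*X₂^3*Y₂^6*Z₂^3 + (-8)*a^4*b^4*X₁^4*Y₁^3*Z₁^2*X₂^4*Y₂^5*Z₂^3 + (-3)*a^4*b^4*X₁^4*Y₁^4*Z₁*X₂^4*Y₂^4*Z₂^4 + (1)*a^4*b^5*X₁^3*Y₁^4*Z₁^2*X₂^6*Y₂^5*Z₂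 + (-2)*a^4*b^5*X₁^4*Y₁^3*Z₁^2*X₂^5*Y₂^6*Z₂ + (-1)*a^4*b^5*X₁^4*Y₁^4*Z₁*X₂^6*Y₂^4*Z₂^2 + (1)*a^4*b^5*X₁^5*Y₁^4*X₂^4*Y₂^5*Z₂^3 + (-1)*a^4*b^5*X₁^5*Y₁^4*X₂^5*Y₂^4*Z₂^3 + (-1)*a^4*b^6*X₁^5*Y₁^4*X₂^6*Y₂^5*Z₂ + (1)*a^4*b^6*X₁^6*Y₁^3*X₂^5*Y₂^6*Z₂ + (-1)*a^5*Y₁^4*Z₁^5*Y₂^6*Z₂^6 + (1)*a^5*b*Y₁^4*Z₁^5*X₂^2*Y₂^6*Z₂^4 + (1)*a^5*b*X₁*Y₁^4*Z₁^4*X₂*Y₂^6*Z₂^5 + (2)*a^5*b^2*X₁*Y₁^4*Z₁^4*X₂^3*Y₂^6*Z₂^3 + (2)*a^5*b^2*X₁^2*Y₁^4*Z₁^3*X₂^2*Y₂^6*Z₂^4 + (-2)*a^5*b^3*X₁^2*Y₁^4*Z₁^3*X₂^4*Y₂^6*Z₂^2 + (-2)*a^5*b^3*X₁^3*Y₁^4*Z₁^2*X₂^3*Y₂^6*Z₂^3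 + (-1)*a^5*b^4*X₁^3*Y₁^4*Z₁^2*X₂^5*Y₂^6*Z₂ + (-1)*a^5*b^4*X₁^4*Y₁^4*Z₁*X₂^4*Y₂^6*Z₂^2 + (1)*a^5*b^5*X₁^4*Y₁^4*Z₁*X₂^6*Y₂^6 + (1)*a^5*b^5*X₁^5*Y₁^4*X₂^5*Y₂^6*Z₂) * h₁ +
    ((1)*Z₁^12*Z₂^9 + (-4)*b*Y₁*Z₁^11*Y₂*Z₂^8 + (4)*b*Y₁*Z₁^11*X₂*Z₂^8 + (4)*b*X₁*Z₁^11*Y₂*Z₂^8 + (-4)*b*X₁*Z₁^11*X₂*Z₂^8 + (3)*b*X₁*Y₁*Z₁^10*Z₂^9 + (-4)*b*X₁^2*Z₁^10*Z₂^9 + (-8)*b^2*Y₁*Z₁^11*Y₂^3*Z₂^6 + (-4)*b^2*Y₁*Z₁^11*X₂^2*Y₂*Z₂^6 + (8)*b^2*X₁*Z₁^11*Y₂^3*Z₂^6 + (4)*b^2*X₁*Z₁^11*X₂^2*Y₂*Z₂^6 + (4)*b^2*X₁*Y₁*Z₁^10*Y₂^2*Z₂^7 + (2)*b^2*X₁*Y₁*Z₁^10*X₂^2*Z₂^7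 + (-4)*b^2*X₁^2*Z₁^10*Y₂^2*Z₂^7 + (-4)*b^2*X₁^2*Z₁^10*X₂^2*Z₂^7 + (8)*b^2*X₁^2*Y₁*Z₁^9*Y₂*Z₂^8 + (-4)*b^2*X₁^3*Z₁^9*Y₂*Z₂^8 + (-4)*b^2*X₁^3*Z₁^9*X₂*Z₂^8 + (-3)*b^2*X₁^3*Y₁*Z₁^8*Z₂^9 + (-12)*b^3*Y₁*Z₁^11*X₂^2*Y₂^3*Z₂^4 + (4)*b^3*Y₁*Z₁^11*X₂^3*Y₂^2*Z₂^4 + (12)*b^3*X₁*Z₁^11*X₂^2*Y₂^3*Z₂^4 + (-4)*b^3*X₁*Z₁^11*X₂^3*Y₂^2*Z₂^4 + (-5)*b^3*X₁*Y₁*Z₁^10*Y₂^4*Z₂^5 + (-4)*b^3*X₁*Y₁*Z₁^10*X₂*Y₂^3*Z₂^5 + (4)*b^3*X₁*Y₁*Z₁^10*X₂^3*Y₂*Z₂^5 + (5)*b^3*X₁^2*Z₁^10*Y₂^4*Z₂^5 + (4)*b^3*X₁^2*Z₁^10*X₂*Y₂^3*Z₂^5 + (-4)*b^3*X₁^2*Z₁^10*X₂^3*Y₂*Z₂^5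 + (20)*b^3*X₁^2*Y₁*Z₁^9*Y₂^3*Z₂^6 + (4)*b^3*X₁^2*Y₁*Z₁^9*X₂*Y₂^2*Z₂^6 + (12)*b^3*X₁^2*Y₁*Z₁^9*X₂^2*Y₂*Z₂^6 + (-4)*b^3*X₁^2*Y₁*Z₁^9*X₂^3*Z₂^6 + (-12)*b^3*X₁^3*Z₁^9*Y₂^3*Z₂^6 + (-4)*b^3*X₁^3*Z₁^9*X₂*Y₂^2*Z₂^6 + (-8)*b^3*X₁^3*Z₁^9*X₂^2*Y₂*Z₂^6 + (4)*b^3*X₁^3*Z₁^9*X₂^3*Z₂^6 + (-6)*b^3*X₁^3*Y₁*Z₁^8*Y₂^2*Z₂^7 + (4)*b^3*X₁^3*Y₁*Z₁^8*X₂*Y₂*Z₂^7 + (-4)*b^3*X₁^3*Y₁*Z₁^8*X₂^2*Z₂^7 + (2)*b^3*X₁^4*Z₁^8*Y₂^2*Z₂^7 + (-4)*b^3*X₁^4*Z₁^8*X₂*Y₂*Z₂^7 + (4)*b^3*X₁^4*Z₁^8*X₂^2*Z₂^7 + (-4)*b^3*X₁^4*Y₁*Z₁^7*Y₂*Z₂^8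 + (-4)*b^3*X₁^4*Y₁*Z₁^7*X₂*Z₂^8 + (-4)*b^4*Y₁*Z₁^11*X₂^4*Y₂^3*Z₂^2 + (4)*b^4*X₁*Z₁^11*X₂^4*Y₂^3*Z₂^2 + (-18)*b^4*X₁*Y₁*Z₁^10*X₂^2*Y₂^4*Z₂^3 + (8)*b^4*X₁*Y₁*Z₁^10*X₂^3*Y₂^3*Z₂^3 + (2)*b^4*X₁*Y₁*Z₁^10*X₂^4*Y₂^2*Z₂^3 + (18)*b^4*X₁^2*Z₁^10*X₂^2*Y₂^4*Z₂^3 + (-8)*b^4*X₁^2*Z₁^10*X₂^3*Y₂^3*Z₂^3 + (-2)*b^4*X₁^2*Z₁^10*X₂^4*Y₂^2*Z₂^3 + (36)*b^4*X₁^2*Y₁*Z₁^9*X₂^2*Y₂^3*Z₂^4 + (-8)*b^4*X₁^2*Y₁*Z₁^9*X₂^3*Y₂^2*Z₂^4 + (4)*b^4*X₁^2*Y₁*Z₁^9*X₂^4*Y₂*Z₂^4 + (-24)*b^4*X₁^3*Z₁^9*X₂^2*Y₂^3*Z₂^4 + (4)*b^4*X₁^3*Z₁^9*X₂^3*Y₂^2*Z₂^4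 + (-4)*b^4*X₁^3*Z₁^9*X₂^4*Y₂*Z₂^4 + (9)*b^4*X₁^3*Y₁*Z₁^8*Y₂^4*Z₂^5 + (12)*b^4*X₁^3*Y₁*Z₁^8*X₂*Y₂^3*Z₂^5 + (-4)*b^4*X₁^3*Y₁*Z₁^8*X₂^3*Y₂*Z₂^5 + (-3)*b^4*X₁^3*Y₁*Z₁^8*X₂^4*Z₂^5 + (-4)*b^4*X₁^4*Z₁^8*Y₂^4*Z₂^5 + (-8)*b^4*X₁^4*Z₁^8*X₂*Y₂^3*Z₂^5 + (4)*b^4*X₁^4*Z₁^8*X₂^4*Z₂^5 + (-16)*b^4*X₁^4*Y₁*Z₁^7*Y₂^3*Z₂^6 + (-8)*b^4*X₁^4*Y₁*Z₁^7*X₂*Y₂^2*Z₂^6 + (-12)*b^4*X₁^4*Y₁*Z₁^7*X₂^2*Y₂*Z₂^6 + (4)*b^4*X₁^5*Z₁^7*Y₂^3*Z₂^6 + (4)*b^4*X₁^5*Z₁^7*X₂*Y₂^2*Z₂^6 + (4)*b^4*X₁^5*Z₁^7*X₂^2*Y₂*Z₂^6 + (4)*b^4*X₁^5*Z₁^7*X₂^3*Z₂^6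 + (2)*b^4*X₁^5*Y₁*Z₁^6*Y₂^2*Z₂^7 + (-4)*b^4*X₁^5*Y₁*Z₁^6*X₂*Y₂*Z₂^7 + (2)*b^4*X₁^5*Y₁*Z₁^6*X₂^2*Z₂^7 + (-5)*b^5*X₁*Y₁*Z₁^10*X₂^4*Y₂^4*Z₂ + (5)*b^5*X₁^2*Z₁^10*X₂^4*Y₂^4*Z₂ + (16)*b^5*X₁^2*Y₁*Z₁^9*X₂^4*Y₂^3*Z₂^2 + (-12)*b^5*X₁^3*Z₁^9*X₂^4*Y₂^3*Z₂^2 + (38)*b^5*X₁^3*Y₁*Z₁^8*X₂^2*Y₂^4*Z₂^3 + (-8)*b^5*X₁^3*Y₁*Z₁^8*X₂^3*Y₂^3*Z₂^3 + (-4)*b^5*X₁^3*Y₁*Z₁^8*X₂^4*Y₂^2*Z₂^3 + (-20)*b^5*X₁^4*Z₁^8*X₂^2*Y₂^4*Z₂^3 + (2)*b^5*X₁^4*Z₁^8*X₂^4*Y₂^2*Z₂^3 + (-40)*b^5*X₁^4*Y₁*Z₁^7*X₂^2*Y₂^3*Z₂^4 + (-8)*b^5*X₁^4*Y₁*Z₁^7*X₂^4*Y₂*Z₂^4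 + (16)*b^5*X₁^5*Z₁^7*X₂^2*Y₂^3*Z₂^4 + (4)*b^5*X₁^5*Z₁^7*X₂^3*Y₂^2*Z₂^4 + (4)*b^5*X₁^5*Z₁^7*X₂^4*Y₂*Z₂^4 + (-5)*b^5*X₁^5*Y₁*Z₁^6*Y₂^4*Z₂^5 + (-12)*b^5*X₁^5*Y₁*Z₁^6*X₂*Y₂^3*Z₂^5 + (-4)*b^5*X₁^5*Y₁*Z₁^6*X₂^3*Y₂*Z₂^5 + (2)*b^5*X₁^5*Y₁*Z₁^6*X₂^4*Z₂^5 + (1)*b^5*X₁^6*Z₁^6*Y₂^4*Z₂^5 + (4)*b^5*X₁^6*Z₁^6*X₂*Y₂^3*Z₂^5 + (4)*b^5*X₁^6*Z₁^6*X₂^3*Y₂*Z₂^5 + (4)*b^5*X₁^6*Y₁*Z₁^5*Y₂^3*Z₂^6 + (4)*b^5*X₁^6*Y₁*Z₁^5*X₂*Y₂^2*Z₂^6 + (4)*b^5*X₁^6*Y₁*Z₁^5*X₂^2*Y₂*Z₂^6 + (4)*b^5*X₁^6*Y₁*Z₁^5*X₂^3*Z₂^6 + (15)*b^6*X₁^3*Y₁*Z₁^8*X₂^4*Y₂^4*Z₂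 + (-10)*b^6*X₁^4*Z₁^8*X₂^4*Y₂^4*Z₂ + (-24)*b^6*X₁^4*Y₁*Z₁^7*X₂^4*Y₂^3*Z₂^2 + (12)*b^6*X₁^5*Z₁^7*X₂^4*Y₂^3*Z₂^2 + (-30)*b^6*X₁^5*Y₁*Z₁^6*X₂^2*Y₂^4*Z₂^3 + (-8)*b^6*X₁^5*Y₁*Z₁^6*X₂^3*Y₂^3*Z₂^3 + (10)*b^6*X₁^6*Z₁^6*X₂^2*Y₂^4*Z₂^3 + (8)*b^6*X₁^6*Z₁^6*X₂^3*Y₂^3*Z₂^3 + (2)*b^6*X₁^6*Z₁^6*X₂^4*Y₂^2*Z₂^3 + (20)*b^6*X₁^6*Y₁*Z₁^5*X₂^2*Y₂^3*Z₂^4 + (8)*b^6*X₁^6*Y₁*Z₁^5*X₂^3*Y₂^2*Z₂^4 + (4)*b^6*X₁^6*Y₁*Z₁^5*X₂^4*Y₂*Z₂^4 + (-4)*b^6*X₁^7*Z₁^5*X₂^2*Y₂^3*Z₂^4 + (-4)*b^6*X₁^7*Z₁^5*X₂^3*Y₂^2*Z₂^4 + (1)*b^6*X₁^7*Y₁*Z₁^4*Y₂^4*Z₂^5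 + (4)*b^6*X₁^7*Y₁*Z₁^4*X₂*Y₂^3*Z₂^5 + (4)*b^6*X₁^7*Y₁*Z₁^4*X₂^3*Y₂*Z₂^5 + (1)*b^6*X₁^7*Y₁*Z₁^4*X₂^4*Z₂^5 + (-20)*b^7*X₁^5*Y₁*Z₁^6*X₂^4*Y₂^4*Z₂ + (10)*b^7*X₁^6*Z₁^6*X₂^4*Y₂^4*Z₂ + (16)*b^7*X₁^6*Y₁*Z₁^5*X₂^4*Y₂^3*Z₂^2 + (-4)*b^7*X₁^7*Z₁^5*X₂^4*Y₂^3*Z₂^2 + (12)*b^7*X₁^7*Y₁*Z₁^4*X₂^2*Y₂^4*Z₂^3 + (12)*b^7*X₁^7*Y₁*Z₁^4*X₂^3*Y₂^3*Z₂^3 + (4)*b^7*X₁^7*Y₁*Z₁^4*X₂^4*Y₂^2*Z₂^3 + (-2)*b^7*X₁^8*Z₁^4*X₂^2*Y₂^4*Z₂^3 + (-4)*b^7*X₁^8*Z₁^4*X₂^3*Y₂^3*Z₂^3 + (-2)*b^7*X₁^8*Z₁^4*X₂^4*Y₂^2*Z₂^3 + (-4)*b^7*X₁^8*Y₁*Z₁^3*X₂^2*Y₂^3*Z₂^4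 + (-4)*b^7*X₁^8*Y₁*Z₁^3*X₂^3*Y₂^2*Z₂^4 + (15)*b^8*X₁^7*Y₁*Z₁^4*X₂^4*Y₂^4*Z₂ + (-5)*b^8*X₁^8*Z₁^4*X₂^4*Y₂^4*Z₂ + (-4)*b^8*X₁^8*Y₁*Z₁^3*X₂^4*Y₂^3*Z₂^2 + (-2)*b^8*X₁^9*Y₁*Z₁^2*X₂^2*Y₂^4*Z₂^3 + (-4)*b^8*X₁^9*Y₁*Z₁^2*X₂^3*Y₂^3*Z₂^3 + (-2)*b^8*X₁^9*Y₁*Z₁^2*X₂^4*Y₂^2*Z₂^3 + (-6)*b^9*X₁^9*Y₁*Z₁^2*X₂^4*Y₂^4*Z₂ + (1)*b^9*X₁^10*Z₁^2*X₂^4*Y₂^4*Z₂ + (1)*b^10*X₁^11*Y₁*X₂^4*Y₂^4*Z₂ + (-1)*a*Y₁^2*Z₁^10*Z₂^9 + (12)*a*b*Y₁*Z₁^11*Y₂^3*Z₂^6 + (2)*a*b*Y₁^2*Z₁^10*Y₂^2*Z₂^7 + (4)*a*b*Y₁^2*Z₁^10*X₂*Y₂*Z₂^7 + (-12)*a*b*X₁*Z₁^11*Y₂^3*Z₂^6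 + (-2)*a*b*X₁*Y₁*Z₁^10*Y₂^2*Z₂^7 + (-8)*a*b*X₁*Y₁*Z₁^10*X₂*Y₂*Z₂^7 + (-8)*a*b*X₁^2*Y₁*Z₁^9*Y₂*Z₂^8 + (12)*a*b^2*Y₁*Z₁^11*X₂^2*Y₂^3*Z₂^4 + (-2)*a*b^2*Y₁^2*Z₁^10*Y₂^4*Z₂^5 + (-12)*a*b^2*X₁*Z₁^11*X₂^2*Y₂^3*Z₂^4 + (14)*a*b^2*X₁*Y₁*Z₁^10*Y₂^4*Z₂^5 + (-12)*a*b^2*X₁^2*Z₁^10*Y₂^4*Z₂^5 + (-32)*a*b^2*X₁^2*Y₁*Z₁^9*Y₂^3*Z₂^6 + (-8)*a*b^2*X₁^2*Y₁*Z₁^9*X₂^2*Y₂*Z₂^6 + (12)*a*b^2*X₁^3*Z₁^9*Y₂^3*Z₂^6 + (2)*a*b^2*X₁^3*Y₁*Z₁^8*Y₂^2*Z₂^7 + (-8)*a*b^2*X₁^3*Y₁*Z₁^8*X₂*Y₂*Z₂^7 + (4)*a*b^3*Y₁*Z₁^11*X₂^3*Y₂^4*Z₂^2 + (-6)*a*b^3*Y₁^2*Z₁^10*X₂^2*Y₂^4*Z₂^3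 + (4)*a*b^3*Y₁^2*Z₁^10*X₂^3*Y₂^3*Z₂^3 + (-4)*a*b^3*X₁*Z₁^11*X₂^3*Y₂^4*Z₂^2 + (30)*a*b^3*X₁*Y₁*Z₁^10*X₂^2*Y₂^4*Z₂^3 + (-16)*a*b^3*X₁*Y₁*Z₁^10*X₂^3*Y₂^3*Z₂^3 + (-24)*a*b^3*X₁^2*Z₁^10*X₂^2*Y₂^4*Z₂^3 + (12)*a*b^3*X₁^2*Z₁^10*X₂^3*Y₂^3*Z₂^3 + (4)*a*b^3*X₁^2*Y₁*Z₁^9*X₂*Y₂^4*Z₂^4 + (-48)*a*b^3*X₁^2*Y₁*Z₁^9*X₂^2*Y₂^3*Z₂^4 + (4)*a*b^3*X₁^2*Y₁*Z₁^9*X₂^3*Y₂^2*Z₂^4 + (-4)*a*b^3*X₁^3*Z₁^9*X₂*Y₂^4*Z₂^4 + (24)*a*b^3*X₁^3*Z₁^9*X₂^2*Y₂^3*Z₂^4 + (-21)*a*b^3*X₁^3*Y₁*Z₁^8*Y₂^4*Z₂^5 + (-16)*a*b^3*X₁^3*Y₁*Z₁^8*X₂*Y₂^3*Z₂^5 + (8)*a*b^3*X₁^3*Y₁*Z₁^8*X₂^3*Y₂*Z₂^5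 + (6)*a*b^3*X₁^4*Z₁^8*Y₂^4*Z₂^5 + (12)*a*b^3*X₁^4*Z₁^8*X₂*Y₂^3*Z₂^5 + (16)*a*b^3*X₁^4*Y₁*Z₁^7*Y₂^3*Z₂^6 + (4)*a*b^3*X₁^4*Y₁*Z₁^7*X₂*Y₂^2*Z₂^6 + (8)*a*b^3*X₁^4*Y₁*Z₁^7*X₂^2*Y₂*Z₂^6 + (-1)*a*b^4*Y₁^2*Z₁^10*X₂^4*Y₂^4*Z₂ + (7)*a*b^4*X₁*Y₁*Z₁^10*X₂^4*Y₂^4*Z₂ + (-6)*a*b^4*X₁^2*Z₁^10*X₂^4*Y₂^4*Z₂ + (-8)*a*b^4*X₁^2*Y₁*Z₁^9*X₂^3*Y₂^4*Z₂^2 + (-16)*a*b^4*X₁^2*Y₁*Z₁^9*X₂^4*Y₂^3*Z₂^2 + (4)*a*b^4*X₁^3*Z₁^9*X₂^3*Y₂^4*Z₂^2 + (12)*a*b^4*X₁^3*Z₁^9*X₂^4*Y₂^3*Z₂^2 + (-60)*a*b^4*X₁^3*Y₁*Z₁^8*X₂^2*Y₂^4*Z₂^3 + (16)*a*b^4*X₁^3*Y₁*Z₁^8*X₂^3*Y₂^3*Z₂^3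 + (2)*a*b^4*X₁^3*Y₁*Z₁^8*X₂^4*Y₂^2*Z₂^3 + (24)*a*b^4*X₁^4*Z₁^8*X₂^2*Y₂^4*Z₂^3 + (-8)*a*b^4*X₁^4*Y₁*Z₁^7*X₂*Y₂^4*Z₂^4 + (48)*a*b^4*X₁^4*Y₁*Z₁^7*X₂^2*Y₂^3*Z₂^4 + (8)*a*b^4*X₁^4*Y₁*Z₁^7*X₂^4*Y₂*Z₂^4 + (4)*a*b^4*X₁^5*Z₁^7*X₂*Y₂^4*Z₂^4 + (-12)*a*b^4*X₁^5*Z₁^7*X₂^2*Y₂^3*Z₂^4 + (7)*a*b^4*X₁^5*Y₁*Z₁^6*Y₂^4*Z₂^5 + (16)*a*b^4*X₁^5*Y₁*Z₁^6*X₂*Y₂^3*Z₂^5 + (8)*a*b^4*X₁^5*Y₁*Z₁^6*X₂^3*Y₂*Z₂^5 + (-24)*a*b^5*X₁^3*Y₁*Z₁^8*X₂^4*Y₂^4*Z₂ + (14)*a*b^5*X₁^4*Z₁^8*X₂^4*Y₂^4*Z₂ + (32)*a*b^5*X₁^4*Y₁*Z₁^7*X₂^4*Y₂^3*Z₂^2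 + (4)*a*b^5*X₁^5*Z₁^7*X₂^3*Y₂^4*Z₂^2 + (-12)*a*b^5*X₁^5*Z₁^7*X₂^4*Y₂^3*Z₂^2 + (40)*a*b^5*X₁^5*Y₁*Z₁^6*X₂^2*Y₂^4*Z₂^3 + (16)*a*b^5*X₁^5*Y₁*Z₁^6*X₂^3*Y₂^3*Z₂^3 + (-8)*a*b^5*X₁^6*Z₁^6*X₂^2*Y₂^4*Z₂^3 + (-12)*a*b^5*X₁^6*Z₁^6*X₂^3*Y₂^3*Z₂^3 + (4)*a*b^5*X₁^6*Y₁*Z₁^5*X₂*Y₂^4*Z₂^4 + (-16)*a*b^5*X₁^6*Y₁*Z₁^5*X₂^2*Y₂^3*Z₂^4 + (-4)*a*b^5*X₁^6*Y₁*Z₁^5*X₂^3*Y₂^2*Z₂^4 + (30)*a*b^6*X₁^5*Y₁*Z₁^6*X₂^4*Y₂^4*Z₂ + (-10)*a*b^6*X₁^6*Z₁^6*X₂^4*Y₂^4*Z₂ + (8)*a*b^6*X₁^6*Y₁*Z₁^5*X₂^3*Y₂^4*Z₂^2 + (-16)*a*b^6*X₁^6*Y₁*Z₁^5*X₂^4*Y₂^3*Z₂^2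 + (-4)*a*b^6*X₁^7*Z₁^5*X₂^3*Y₂^4*Z₂^2 + (-10)*a*b^6*X₁^7*Y₁*Z₁^4*X₂^2*Y₂^4*Z₂^3 + (-16)*a*b^6*X₁^7*Y₁*Z₁^4*X₂^3*Y₂^3*Z₂^3 + (-2)*a*b^6*X₁^7*Y₁*Z₁^4*X₂^4*Y₂^2*Z₂^3 + (-16)*a*b^7*X₁^7*Y₁*Z₁^4*X₂^4*Y₂^4*Z₂ + (2)*a*b^7*X₁^8*Z₁^4*X₂^4*Y₂^4*Z₂ + (-4)*a*b^7*X₁^8*Y₁*Z₁^3*X₂^3*Y₂^4*Z₂^2 + (3)*a*b^8*X₁^9*Y₁*Z₁^2*X₂^4*Y₂^4*Z₂ + (-2)*a^2*Y₁^2*Z₁^10*Y₂^2*Z₂^7 + (-4)*a^2*b*Y₁*Z₁^11*X₂*Y₂^4*Z₂^4 + (5)*a^2*b*Y₁^2*Z₁^10*Y₂^4*Z₂^5 + (-8)*a^2*b*Y₁^2*Z₁^10*X₂*Y₂^3*Z₂^5 + (4)*a^2*b*Y₁^3*Z₁^9*Y₂^3*Z₂^6 + (-4)*a^2*b*Y₁^3*Z₁^9*X₂*Y₂^2*Z₂^6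 + (4)*a^2*b*X₁*Z₁^11*X₂*Y₂^4*Z₂^4 + (-9)*a^2*b*X₁*Y₁*Z₁^10*Y₂^4*Z₂^5 + (8)*a^2*b*X₁*Y₁*Z₁^10*X₂*Y₂^3*Z₂^5 + (4)*a^2*b*X₁^2*Z₁^10*Y₂^4*Z₂^5 + (8)*a^2*b*X₁^2*Y₁*Z₁^9*Y₂^3*Z₂^6 + (6)*a^2*b^2*Y₁^2*Z₁^10*X₂^2*Y₂^4*Z₂^3 + (4)*a^2*b^2*Y₁^3*Z₁^9*X₂^2*Y₂^3*Z₂^4 + (-10)*a^2*b^2*X₁*Y₁*Z₁^10*X₂^2*Y₂^4*Z₂^3 + (4)*a^2*b^2*X₁^2*Z₁^10*X₂^2*Y₂^4*Z₂^3 + (8)*a^2*b^2*X₁^2*Y₁*Z₁^9*X₂^2*Y₂^3*Z₂^4 + (4)*a^2*b^2*X₁^3*Z₁^9*X₂*Y₂^4*Z₂^4 + (9)*a^2*b^2*X₁^3*Y₁*Z₁^8*Y₂^4*Z₂^5 + (8)*a^2*b^2*X₁^3*Y₁*Z₁^8*X₂*Y₂^3*Z₂^5 + (8)*a^2*b^3*X₁^2*Y₁*Z₁^9*X₂^3*Y₂^4*Z₂^2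 + (-4)*a^2*b^3*X₁^3*Z₁^9*X₂^3*Y₂^4*Z₂^2 + (20)*a^2*b^3*X₁^3*Y₁*Z₁^8*X₂^2*Y₂^4*Z₂^3 + (-8)*a^2*b^3*X₁^3*Y₁*Z₁^8*X₂^3*Y₂^3*Z₂^3 + (-4)*a^2*b^3*X₁^4*Z₁^8*X₂^2*Y₂^4*Z₂^3 + (8)*a^2*b^3*X₁^4*Y₁*Z₁^7*X₂*Y₂^4*Z₂^4 + (-8)*a^2*b^3*X₁^4*Y₁*Z₁^7*X₂^2*Y₂^3*Z₂^4 + (9)*a^2*b^4*X₁^3*Y₁*Z₁^8*X₂^4*Y₂^4*Z₂ + (-4)*a^2*b^4*X₁^4*Z₁^8*X₂^4*Y₂^4*Z₂ + (-8)*a^2*b^4*X₁^4*Y₁*Z₁^7*X₂^4*Y₂^3*Z₂^2 + (-4)*a^2*b^4*X₁^5*Z₁^7*X₂^3*Y₂^4*Z₂^2 + (-10)*a^2*b^4*X₁^5*Y₁*Z₁^6*X₂^2*Y₂^4*Z₂^3 + (-8)*a^2*b^4*X₁^5*Y₁*Z₁^6*X₂^3*Y₂^3*Z₂^3 + (-10)*a^2*b^5*X₁^5*Y₁*Z₁^6*X₂^4*Y₂^4*Z₂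 + (-8)*a^2*b^5*X₁^6*Y₁*Z₁^5*X₂^3*Y₂^4*Z₂^2 + (1)*a^2*b^6*X₁^7*Y₁*Z₁^4*X₂^4*Y₂^4*Z₂ + (2)*a^3*Y₁^4*Z₁^8*Y₂^2*Z₂^7 + (-4)*a^3*b*Y₁^3*Z₁^9*X₂*Y₂^4*Z₂^4 + (1)*a^3*b*Y₁^4*Z₁^8*Y₂^4*Z₂^5 + (-4)*a^3*b*Y₁^4*Z₁^8*X₂*Y₂^3*Z₂^5 + (2)*a^3*b^2*Y₁^4*Z₁^8*X₂^2*Y₂^4*Z₂^3 + (1)*a^4*Y₁^4*Z₁^8*Y₂^4*Z₂^5 + (-1)*a^5*Y₁^6*Z₁^6*Y₂^4*Z₂^5) * h₂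
end

section
/- Let E be an elliptic curve and P₁, P₂ points on E with P₁ + P₂ ≠ O. Let L_{P₁,P₂} denote the line function through P₁ and P₂ (the tangent when P₁ = P₂) divided by Z, and define g_{P₁,P₂} = L_{P₁,P₂} / L_{P₁+P₂, −(P₁+P₂)}. Then div(g_{P₁,P₂}) = (P₁) + (P₂) − (P₁ + P₂) − (O). -/
/-! The line through `P₁ + P₂` and `−(P₁ + P₂)` is vertical, so its third point is `O` and its
divisor is `(P₁ + P₂) + (−(P₁ + P₂)) − 2(O)`. Since `div` turns quotients into differences, the
`(−(P₁ + P₂))` term and two of the three copies of `(O)` cancel. -/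

theorem map_div_of_map_mul_eq_add {G A : Type*} [Group G] [AddGroup A] (d : G → A)
    (hd : ∀ f g : G, d (f * g) = d f + d g) (f g : G) : d (f / g) = d f - d g :=
  eq_sub_of_add_eq (by rw [← hd, div_mul_cancel])

open scoped Classical in
theorem divisor_of_g_general {F : Type*} [Field F] (W : WeierstrassCurve.Affine F)
    (d : (FractionRing W.CoordinateRing)ˣ → (W.Point →₀ ℤ))
    (hd : ∀ f g : (FractionRing W.CoordinateRing)ˣ, d (f * g) = d f + d g)
    (L : W.Point → W.Point → (FractionRing W.CoordinateRing)ˣ)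
    (hL : ∀ P₁ P₂ : W.Point,
      d (L P₁ P₂) = Finsupp.single P₁ 1 + Finsupp.single P₂ 1 +
        Finsupp.single (-(P₁ + P₂)) 1 - Finsupp.single (0 : W.Point) 3)
    (P₁ P₂ : W.Point) :
    d (L P₁ P₂ / L (P₁ + P₂) (-(P₁ + P₂))) =
      Finsupp.single P₁ 1 + Finsupp.single P₂ 1 -
        Finsupp.single (P₁ + P₂) 1 - Finsupp.single (0 : W.Point) 1 := by
  rw [map_div_of_map_mul_eq_add d hd, hL, hL, add_neg_cancel, neg_zero]
  abel

open scoped Classical in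
/-- Let `E` be an elliptic curve with function field `K`, and let `div` be the divisor map on
nonzero rational functions (a homomorphism from `Kˣ` to divisors). If `L P₁ P₂` denotes the
line function through `P₁` and `P₂` (divided by `Z`), with divisor
`(P₁) + (P₂) + (−(P₁+P₂)) − 3(O)`, then the function
`g_{P₁,P₂} = L_{P₁,P₂} / L_{P₁+P₂, −(P₁+P₂)}` has divisor
`(P₁) + (P₂) − (P₁ + P₂) − (O)`. -/
theorem divisor_of_g {F : Type*} [Field F] (W : WeierstrassCurve.Affine F)
    (d : (FractionRing W.CoordinateRing)ˣ → (W.Point →₀ ℤ))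
    (hd : ∀ f g : (FractionRing W.CoordinateRing)ˣ, d (f * g) = d f + d g)
    (L : W.Point → W.Point → (FractionRing W.CoordinateRing)ˣ)
    (hL : ∀ P₁ P₂ : W.Point,
      d (L P₁ P₂) = Finsupp.single P₁ 1 + Finsupp.single P₂ 1 +
        Finsupp.single (-(P₁ + P₂)) 1 - Finsupp.single (0 : W.Point) 3)
    (P₁ P₂ : W.Point) (h : P₁ + P₂ ≠ 0) :
    d (L P₁ P₂ / L (P₁ + P₂) (-(P₁ + P₂))) =
      Finsupp.single P₁ 1 + Finsupp.single P₂ 1 -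
        Finsupp.single (P₁ + P₂) 1 - Finsupp.single (0 : W.Point) 1 :=
  divisor_of_g_general W d hd L hL P₁ P₂
end
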